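/- arXiv:1503.04121 — 8 statements merged into one kernel-verified Lean document; each statement's English description precedes it below -/
import Mathlib

section
/- Let p ≥ 2 be a real number and let f be analytic on 𝔻. Fix r ∈ (0,1) and θ ∈ ℝ with f(r e^{iθ}) ≠ 0. Then the function φ ↦ |f(r e^{iφ})|^{p−2} f(r e^{iφ}) is differentiable at φ = θ, and the absolute value of its derivative at θ is at most (p − 1) |f(r e^{iθ})|^{p−2} · r · |f′(r e^{iθ})|. -/
/-!
Along the circle, `g φ = f (r e^{iφ})` has derivative `f'(z) · i z`. For a differentiable curve `g`
in a real inner product space with `g t ≠ 0`, writing `‖g‖ ^ q = (‖g‖ ^ 2) ^ (q / 2)` gives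
`(‖g‖ ^ q)' = q ‖g‖ ^ (q - 2) ⟪g, g'⟫`, so by the product rule and Cauchy–Schwarz the derivative
of `‖g‖ ^ q • g` has norm at most `(q + 1) ‖g‖ ^ q ‖g'‖`.
-/

open scoped RealInnerProductSpace

section NormRpowSmul

variable {E : Type*} [NormedAddCommGroup E] [InnerProductSpace ℝ E]
  {g : ℝ → E} {g' : E} {t : ℝ}

theorem HasDerivAt.norm_rpow (hg : HasDerivAt g g' t) (hgt : g t ≠ 0) (q : ℝ) :
    HasDerivAt (fun s => ‖g s‖ ^ q) (q * ‖g t‖ ^ (q - 2) * ⟪g t, g'⟫) t := by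
  have hsq_rpow (s : ℝ) (a : ℝ) : (‖g s‖ ^ 2) ^ (a / 2) = ‖g s‖ ^ a := by
    rw [← Real.rpow_natCast_mul (norm_nonneg _)]; congr 1; push_cast; ring
  have hrpow := hg.norm_sq.rpow_const (p := q / 2) (Or.inl (by positivity))
  convert hrpow using 1
  · simp only [hsq_rpow]
  · rw [show q / 2 - 1 = (q - 2) / 2 by ring, hsq_rpow]; ring

theorem HasDerivAt.norm_rpow_smul (hg : HasDerivAt g g' t) (hgt : g t ≠ 0) (q : ℝ) :
    HasDerivAt (fun s => ‖g s‖ ^ q • g s)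
      (‖g t‖ ^ q • g' + (q * ‖g t‖ ^ (q - 2) * ⟪g t, g'⟫) • g t) t :=
  (hg.norm_rpow hgt q).smul hg

theorem norm_rpow_smul_deriv_le {q : ℝ} (hq : 0 ≤ q) (x v : E) :
    ‖‖x‖ ^ q • v + (q * ‖x‖ ^ (q - 2) * ⟪x, v⟫) • x‖ ≤ (q + 1) * ‖x‖ ^ q * ‖v‖ := by
  rcases eq_or_ne x 0 with rfl | hx
  · have h0 : 0 ≤ (0 : ℝ) ^ q := Real.rpow_nonneg le_rfl q
    simp only [norm_zero, inner_zero_left, mul_zero, zero_smul, add_zero, norm_smul,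
      Real.norm_of_nonneg h0]
    nlinarith [mul_nonneg (mul_nonneg hq h0) (norm_nonneg v)]
  have hpow : ‖x‖ ^ (q - 2) * (‖x‖ * ‖x‖) = ‖x‖ ^ q := by
    rw [← sq, ← Real.rpow_natCast, ← Real.rpow_add (norm_pos_iff.mpr hx)]; norm_num
  have hinner : |⟪x, v⟫| ≤ ‖x‖ * ‖v‖ := abs_real_inner_le_norm x v
  have hnonneg (a : ℝ) : 0 ≤ ‖x‖ ^ a := Real.rpow_nonneg (norm_nonneg x) a
  calc _ ≤ ‖x‖ ^ q * ‖v‖ + q * ‖x‖ ^ (q - 2) * |⟪x, v⟫| * ‖x‖ := by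
        refine (norm_add_le _ _).trans_eq ?_
        rw [norm_smul, norm_smul, Real.norm_eq_abs, Real.norm_eq_abs, abs_mul, abs_mul,
          abs_of_nonneg hq, abs_of_nonneg (hnonneg q), abs_of_nonneg (hnonneg (q - 2))]
    _ ≤ ‖x‖ ^ q * ‖v‖ + q * ‖x‖ ^ (q - 2) * (‖x‖ * ‖v‖) * ‖x‖ := by gcongr
    _ = (q + 1) * ‖x‖ ^ q * ‖v‖ := by rw [← hpow]; ring

end NormRpowSmul

theorem stmt8 (p : ℝ) (hp : 2 ≤ p) (f : ℂ → ℂ)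
    (hf : DifferentiableOn ℂ f (Metric.ball (0 : ℂ) 1))
    (r θ : ℝ) (hr0 : 0 < r) (hr1 : r < 1)
    (hfz : f ((r : ℂ) * Complex.exp ((θ : ℂ) * Complex.I)) ≠ 0) :
    ∃ d : ℂ,
      HasDerivAt
        (fun φ : ℝ =>
          ((‖f ((r : ℂ) * Complex.exp ((φ : ℂ) * Complex.I))‖ ^ (p - 2) : ℝ) : ℂ) *
            f ((r : ℂ) * Complex.exp ((φ : ℂ) * Complex.I))) d θ ∧
      ‖d‖ ≤
        (p - 1) * ‖f ((r : ℂ) * Complex.exp ((θ : ℂ) * Complex.I))‖ ^ (p - 2) *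
          r * ‖deriv f ((r : ℂ) * Complex.exp ((θ : ℂ) * Complex.I))‖ := by
  simp only [← circleMap_zero] at hfz ⊢
  simp only [← Complex.real_smul]
  set z := circleMap 0 r θ
  have hz_norm : ‖z‖ = r := by rw [norm_circleMap_zero, abs_of_pos hr0]
  have hz : z ∈ Metric.ball (0 : ℂ) 1 := mem_ball_zero_iff.mpr (hz_norm.trans_lt hr1)
  have hg : HasDerivAt (f ∘ circleMap 0 r) (deriv f z * (z * Complex.I)) θ :=
    (hf.differentiableAt (Metric.isOpen_ball.mem_nhds hz)).hasDerivAt.comp θ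
      (hasDerivAt_circleMap 0 r θ)
  refine ⟨_, hg.norm_rpow_smul hfz (p - 2), ?_⟩
  calc _ ≤ (p - 2 + 1) * ‖f z‖ ^ (p - 2) * ‖deriv f z * (z * Complex.I)‖ :=
        norm_rpow_smul_deriv_le (by linarith) _ _
    _ = _ := by rw [norm_mul, norm_mul, hz_norm, Complex.norm_I]; ring
end

section
/- Let b : ℕ → ℝ satisfy b₀ = 0, b is strictly increasing, bⱼ < 1 for all j, and bⱼ → 1 as j → ∞. Let (m_j)_{j≥1} be a strictly increasing sequence of non-negative integers such that ∫_{b_{j−1}}^{b_j} (m_j + 1) r^{m_j + 1} dr ≥ 1/4 for all j ≥ 1. Let (c_j)_{j≥1} be a bounded sequence of complex numbers with Σ_{j≥1} |c_j|² = ∞. Define f : 𝔻 → ℂ by f(z) = c_j (z/|z|)^{m_j} when b_{j−1} ≤ |z| < b_j and z ≠ 0, and f(0) = 0. Then f is bounded and measurable on 𝔻, and the Taylor coefficients of 𝒫f at 0 are not square-summable; that is, Σ_{n≥0} |(𝒫f)^{(n)}(0)/n!|² = ∞ (so 𝒫f does not lie in the Hardy space H²). -/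
/-!
Expanding the kernel, `(1 - w̄z)⁻² = ∑ (n + 1) (w̄z)ⁿ`, shows that the `n`-th Taylor coefficient
of `𝒫f` at `0` is `(n + 1)/π ∫_𝔻 f(w) w̄ⁿ dA(w)`. In polar coordinates, on the `j`-th annulus
only the angular frequency `m_j` survives, so the coefficient of index `m_j` is
`2 c_j ∫_{b_{j-1}}^{b_j} (m_j + 1) r^{m_j + 1} dr`, of modulus at least `|c_j| / 2`. As the `m_j`
are distinct, square-summable Taylor coefficients would force `∑ |c_j|² < ∞`.
-/

open MeasureTheory Set Filter

/-- The Bergman projection of a function `f` on the unit disc. -/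
noncomputable def bergman (f : ℂ → ℂ) (z : ℂ) : ℂ :=
  (1 / (Real.pi : ℂ)) * ∫ w in Metric.ball (0 : ℂ) 1, f w / (1 - (starRingEnd ℂ) w * z) ^ 2

open Metric ComplexConjugate FormalMultilinearSeries Function
open scoped Nat Real Topology

theorem iteratedDeriv_div_factorial_of_hasFPowerSeriesAt {𝕜 : Type*}
    [NontriviallyNormedField 𝕜] [CompleteSpace 𝕜] [CharZero 𝕜] {g : 𝕜 → 𝕜} {a : ℕ → 𝕜} {x : 𝕜}
    (h : HasFPowerSeriesAt g (ofScalars 𝕜 a) x) (n : ℕ) :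
    iteratedDeriv n g x / n ! = a n :=
  congrFun ((ofScalars_series_eq_iff _ _ _).1
    (h.analyticAt.hasFPowerSeriesAt.eq_formalMultilinearSeries h)) n

theorem hasSum_succ_mul_geometric {𝕜 : Type*} [NormedField 𝕜] [HasSummableGeomSeries 𝕜]
    {x : 𝕜} (hx : ‖x‖ < 1) : HasSum (fun n : ℕ => ((n : 𝕜) + 1) * x ^ n) (1 / (1 - x) ^ 2) := by
  simpa using hasSum_choose_mul_geometric_of_norm_lt_one 1 hx

noncomputable def bergmanCoeff (f : ℂ → ℂ) (n : ℕ) : ℂ :=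
  (n + 1) / π * ∫ w in ball (0 : ℂ) 1, f w * conj w ^ n

section BergmanSeries

variable {f : ℂ → ℂ} {B : ℝ}

theorem norm_bergmanCoeff_le (hB : ∀ z ∈ ball (0 : ℂ) 1, ‖f z‖ ≤ B) (n : ℕ) :
    ‖bergmanCoeff f n‖ ≤ (n + 1) * B := by
  have hB0 : 0 ≤ B := (norm_nonneg _).trans (hB 0 (mem_ball_self one_pos))
  have hint : ‖∫ w in ball (0 : ℂ) 1, f w * conj w ^ n‖ ≤ B * π := by
    refine (norm_setIntegral_le_of_norm_le_const (C := B) measure_ball_lt_top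
      fun w hw => ?_).trans_eq ?_
    · rw [norm_mul, norm_pow, Complex.norm_conj]
      simpa using mul_le_mul (hB w hw) (pow_le_one₀ (norm_nonneg _) (mem_ball_zero_iff.1 hw).le)
        (by positivity) hB0
    · simp [measureReal_def, Complex.volume_ball]
  rw [bergmanCoeff, norm_mul, norm_div, Complex.norm_real, Real.norm_of_nonneg Real.pi_pos.le]
  calc ‖(n : ℂ) + 1‖ / π * ‖∫ w in ball (0 : ℂ) 1, f w * conj w ^ n‖
      ≤ (n + 1) / π * (B * π) := by
        gcongr
        exact_mod_cast Complex.norm_natCast (n + 1) |>.le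
    _ = (n + 1) * B := by field_simp

theorem one_le_radius_bergmanCoeff (hB : ∀ z ∈ ball (0 : ℂ) 1, ‖f z‖ ≤ B) :
    1 ≤ (ofScalars ℂ (bergmanCoeff f)).radius := by
  refine ENNReal.le_of_forall_nnreal_lt fun r hr => le_radius_of_summable_norm _ ?_
  have hr1 : ‖(r : ℝ)‖ < 1 := by simpa using hr
  refine .of_nonneg_of_le (fun n => by positivity) (fun n => ?_)
    ((hasSum_succ_mul_geometric hr1).summable.mul_left B)
  rw [ofScalars_norm, mul_left_comm, ← mul_assoc]
  exact mul_le_mul_of_nonneg_right (norm_bergmanCoeff_le hB n) (by positivity)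

theorem hasSum_bergman (hf : AEStronglyMeasurable f (volume.restrict (ball (0 : ℂ) 1)))
    (hB : ∀ z ∈ ball (0 : ℂ) 1, ‖f z‖ ≤ B) {y : ℂ} (hy : ‖y‖ < 1) :
    HasSum (fun n => bergmanCoeff f n * y ^ n) (bergman f y) := by
  have : IsFiniteMeasure (volume.restrict (ball (0 : ℂ) 1)) :=
    isFiniteMeasure_restrict.2 measure_ball_lt_top.ne
  have hwy : ∀ w ∈ ball (0 : ℂ) 1, ‖conj w * y‖ ≤ ‖y‖ := fun w hw => by
    rw [norm_mul, Complex.norm_conj]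
    exact mul_le_of_le_one_left (norm_nonneg _) (mem_ball_zero_iff.1 hw).le
  have hterm : ∀ n : ℕ, bergmanCoeff f n * y ^ n =
      1 / π * ∫ w in ball (0 : ℂ) 1, f w * ((n + 1) * (conj w * y) ^ n) := fun n => by
    have hw : ∀ w, f w * ((n + 1) * (conj w * y) ^ n) = (n + 1) * y ^ n * (f w * conj w ^ n) :=
      fun w => by ring
    simp_rw [hw, integral_const_mul, bergmanCoeff]
    ring
  simp_rw [hterm]
  refine .mul_left _ (hasSum_integral_of_dominated_convergence
    (fun n _ => B * ((n + 1) * ‖y‖ ^ n)) (fun n => ?_) (fun n => ?_) ?_ ?_ ?_)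
  · exact hf.mul (by fun_prop)
  · filter_upwards [ae_restrict_mem measurableSet_ball] with w hw
    rw [norm_mul, norm_mul, norm_pow]
    gcongr
    · exact (norm_nonneg _).trans (hB w hw)
    · exact hB w hw
    · exact_mod_cast (Complex.norm_natCast (n + 1)).le
    · exact hwy w hw
  · exact .of_forall fun _ =>
      (hasSum_succ_mul_geometric (by simpa using hy)).summable.mul_left B
  · exact integrable_const _
  · filter_upwards [ae_restrict_mem measurableSet_ball] with w hw
    simpa only [mul_one_div] using
      (hasSum_succ_mul_geometric ((hwy w hw).trans_lt hy)).mul_left (f w)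

theorem hasFPowerSeriesOnBall_bergman
    (hf : AEStronglyMeasurable f (volume.restrict (ball (0 : ℂ) 1)))
    (hB : ∀ z ∈ ball (0 : ℂ) 1, ‖f z‖ ≤ B) :
    HasFPowerSeriesOnBall (bergman f) (ofScalars ℂ (bergmanCoeff f)) 0 1 where
  r_le := one_le_radius_bergmanCoeff hB
  r_pos := one_pos
  hasSum {y} hy := by
    rw [zero_add, ofScalars_apply_eq']
    simpa [smul_eq_mul] using
      hasSum_bergman hf hB (y := y) (by simpa [← ofReal_norm] using hy)

theorem iteratedDeriv_bergman_div_factorial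
    (hf : AEStronglyMeasurable f (volume.restrict (ball (0 : ℂ) 1)))
    (hB : ∀ z ∈ ball (0 : ℂ) 1, ‖f z‖ ≤ B) (n : ℕ) :
    iteratedDeriv n (bergman f) 0 / n ! = bergmanCoeff f n :=
  iteratedDeriv_div_factorial_of_hasFPowerSeriesAt
    (hasFPowerSeriesOnBall_bergman hf hB).hasFPowerSeriesAt n

end BergmanSeries

/-- The centre is excluded: `w / ‖w‖` is a unit vector only for `w ≠ 0`. -/
def annulus (s t : ℝ) : Set ℂ := {w | w ≠ 0 ∧ s ≤ ‖w‖ ∧ ‖w‖ < t}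

theorem measurableSet_annulus (s t : ℝ) : MeasurableSet (annulus s t) :=
  (measurableSet_singleton 0).compl.inter
    ((measurableSet_le measurable_const measurable_norm).inter
      (measurableSet_lt measurable_norm measurable_const))

theorem integral_exp_int_mul_I (k : ℤ) :
    ∫ θ in Ioo (-π) π, Complex.exp (k * θ * Complex.I) =
      if k = 0 then ((2 * π : ℝ) : ℂ) else 0 := by
  rw [← integral_Ioc_eq_integral_Ioo,
    ← intervalIntegral.integral_of_le (by linarith [Real.pi_pos])]
  split_ifs with hk
  · simp [hk, two_mul]
  · have hkI : (k : ℂ) * Complex.I ≠ 0 := by simp [hk]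
    simp_rw [mul_right_comm _ _ Complex.I]
    rw [integral_exp_mul_complex hkI]
    have hper :
        (k : ℂ) * Complex.I * π = k * Complex.I * (-π : ℝ) + k * (2 * π * Complex.I) := by
      push_cast
      ring
    rw [hper, Complex.exp_add, Complex.exp_int_mul_two_pi_mul_I, mul_one, sub_self, zero_div]

theorem polarCoord_symm_div_norm_pow_mul_conj_pow {r : ℝ} (hr : 0 < r) (θ : ℝ) (j n : ℕ) :
    (Complex.polarCoord.symm (r, θ) / ‖Complex.polarCoord.symm (r, θ)‖) ^ j *
      conj (Complex.polarCoord.symm (r, θ)) ^ n =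
      r ^ n * Complex.exp (((j : ℤ) - n : ℤ) * θ * Complex.I) := by
  have hw : Complex.polarCoord.symm (r, θ) = r * Complex.exp (θ * Complex.I) := by
    rw [Complex.polarCoord_symm_apply, Complex.exp_mul_I, ← Complex.ofReal_cos,
      ← Complex.ofReal_sin]
  have hr' : (r : ℂ) ≠ 0 := Complex.ofReal_ne_zero.2 hr.ne'
  rw [Complex.norm_polarCoord_symm, abs_of_pos hr, hw, map_mul, Complex.conj_ofReal,
    ← Complex.exp_conj, mul_div_cancel_left₀ _ hr', mul_pow, ← Complex.exp_nat_mul,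
    ← Complex.exp_nat_mul, mul_left_comm, ← Complex.exp_add]
  congr 2
  simp only [map_mul, Complex.conj_ofReal, Complex.conj_I]
  push_cast
  ring

theorem setIntegral_annulus_eq_polar {E : Type*} [NormedAddCommGroup E] [NormedSpace ℝ E]
    (s t : ℝ) (g : ℂ → E) :
    ∫ w in annulus s t, g w =
      ∫ p in (Ioi 0 ∩ Ico s t) ×ˢ Ioo (-π) π, p.1 • g (Complex.polarCoord.symm p) := by
  have hmem : ∀ p ∈ polarCoord.target,
      Complex.polarCoord.symm p ∈ annulus s t ↔ p ∈ Ico s t ×ˢ (univ : Set ℝ) := by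
    rintro ⟨r, θ⟩ ⟨hr, -⟩
    have hnorm : ‖Complex.polarCoord.symm (r, θ)‖ = r := by
      rw [Complex.norm_polarCoord_symm, abs_of_pos hr]
    simp only [annulus, mem_ofPred_eq, hnorm, mem_prod, mem_Ico, mem_univ, and_true]
    exact and_iff_right (norm_pos_iff.1 (by rwa [hnorm]))
  have hset : (Ioi 0 ∩ Ico s t) ×ˢ Ioo (-π) π = polarCoord.target ∩ Ico s t ×ˢ univ := by
    rw [polarCoord_target, prod_inter_prod, inter_univ, inter_comm]
  rw [← integral_indicator (measurableSet_annulus s t), ← Complex.integral_comp_polarCoord_symm,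
    hset, ← setIntegral_indicator (measurableSet_Ico.prod .univ)]
  refine setIntegral_congr_fun polarCoord.open_target.measurableSet fun p hp => ?_
  simp only [indicator, hmem p hp]
  split_ifs <;> simp

theorem setIntegral_Ioi_inter_Ico_eq_intervalIntegral {E : Type*} [NormedAddCommGroup E]
    [NormedSpace ℝ E] {s t : ℝ} (hs : 0 ≤ s) (hst : s ≤ t) (g : ℝ → E) :
    ∫ r in Ioi 0 ∩ Ico s t, g r = ∫ r in s..t, g r := by
  have hset : Ioi 0 ∩ Ico s t = Ico s t \ {0} := by
    ext r
    simp only [mem_inter_iff, mem_Ioi, mem_Ico, Set.mem_sdiff, mem_singleton_iff]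
    grind
  rw [hset, setIntegral_congr_set (sdiff_null_ae_eq_self (measure_singleton 0)),
    integral_Ico_eq_integral_Ioo, ← integral_Ioc_eq_integral_Ioo,
    intervalIntegral.integral_of_le hst]

theorem setIntegral_annulus_div_norm_pow_mul_conj_pow {s t : ℝ} (hs : 0 ≤ s) (hst : s ≤ t)
    (j n : ℕ) :
    ∫ w in annulus s t, (w / ‖w‖) ^ j * conj w ^ n =
      if j = n then ((2 * π * ∫ r in s..t, r ^ (n + 1) : ℝ) : ℂ) else 0 := by
  have hpolar : EqOn
      (fun p : ℝ × ℝ => p.1 • ((Complex.polarCoord.symm p / ‖Complex.polarCoord.symm p‖) ^ j *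
        conj (Complex.polarCoord.symm p) ^ n))
      (fun p => (p.1 : ℂ) ^ (n + 1) * Complex.exp (((j : ℤ) - n : ℤ) * p.2 * Complex.I))
      ((Ioi 0 ∩ Ico s t) ×ˢ Ioo (-π) π) := by
    rintro ⟨r, θ⟩ ⟨⟨hr, -⟩, -⟩
    simp only [polarCoord_symm_div_norm_pow_mul_conj_pow hr, Complex.real_smul]
    ring
  rw [setIntegral_annulus_eq_polar, setIntegral_congr_fun
    ((measurableSet_Ioi.inter measurableSet_Ico).prod measurableSet_Ioo) hpolar,
    Measure.volume_eq_prod, setIntegral_prod_mul (fun r : ℝ => (r : ℂ) ^ (n + 1))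
      (fun θ : ℝ => Complex.exp (((j : ℤ) - n : ℤ) * θ * Complex.I)),
    setIntegral_Ioi_inter_Ico_eq_intervalIntegral hs hst, integral_exp_int_mul_I]
  simp only [sub_eq_zero, Nat.cast_inj]
  split_ifs
  · push_cast [← intervalIntegral.integral_ofReal]
    ring
  · exact mul_zero _

theorem measurable_of_eqOn_iUnion {α β ι : Type*} [MeasurableSpace α] [MeasurableSpace β]
    [Countable ι] [Nonempty ι] {t : ι → Set α} (ht : ∀ i, MeasurableSet (t i)) {g : ι → α → β}
    (hg : ∀ i, Measurable (g i)) {F : α → β} (hF : ∀ i, EqOn F (g i) (t i)) {y : β}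
    (hFy : ∀ x ∉ ⋃ i, t i, F x = y) : Measurable F := by
  classical
  obtain ⟨G, hGm, hG⟩ := exists_measurable_piecewise t ht g hg fun i j _ x hx =>
    (hF i hx.1).symm.trans (hF j hx.2)
  have hFG : F = (⋃ i, t i).piecewise G fun _ => y := by
    ext x
    by_cases hx : x ∈ ⋃ i, t i
    · obtain ⟨i, hi⟩ := mem_iUnion.1 hx
      rw [piecewise_eq_of_mem _ _ _ hx, hF i hi, hG i hi]
    · rw [piecewise_eq_of_notMem _ _ _ hx, hFy x hx]
  exact hFG ▸ hGm.piecewise (.iUnion ht) measurable_const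

section Shells

variable {b : ℕ → ℝ} {c : ℕ → ℂ} {m : ℕ → ℕ} {f : ℂ → ℂ}

theorem annulus_subset_ball (hb : ∀ k, b k < 1) (k : ℕ) :
    annulus (b k) (b (k + 1)) ⊆ ball (0 : ℂ) 1 :=
  fun _ hw => mem_ball_zero_iff.2 (hw.2.2.trans (hb _))

theorem ball_sdiff_zero_subset_iUnion_annulus (hb0 : b 0 = 0) (hb : Tendsto b atTop (𝓝 1)) :
    ball (0 : ℂ) 1 \ {0} ⊆ ⋃ k, annulus (b k) (b (k + 1)) := by
  rintro w ⟨hw1, hw0⟩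
  obtain ⟨N, hN⟩ := (hb.eventually (eventually_gt_nhds (mem_ball_zero_iff.1 hw1))).exists
  have hw : ‖w‖ ∈ Ico (b 0) (b N) := ⟨hb0 ▸ norm_nonneg w, hN⟩
  obtain ⟨k, -, hk⟩ := mem_iUnion₂.1 (Ico_subset_biUnion_Ico N b hw)
  exact mem_iUnion.2 ⟨k, hw0, hk⟩

theorem pairwise_disjoint_annulus (hb : Monotone b) :
    Pairwise (Disjoint on fun k => annulus (b k) (b (k + 1))) := by
  refine pairwise_disjoint_on _ |>.2 fun i j hij => disjoint_left.2 ?_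
  rintro w ⟨-, -, hwi⟩ ⟨-, hwj, -⟩
  exact (hwi.trans_le (hb hij)).not_ge hwj

theorem integral_ball_eq_tsum_annulus {E : Type*} [NormedAddCommGroup E] [NormedSpace ℝ E]
    (hb0 : b 0 = 0) (hb1 : ∀ k, b k < 1) (hbt : Tendsto b atTop (𝓝 1)) (hb : Monotone b)
    {g : ℂ → E} (hg : IntegrableOn g (ball (0 : ℂ) 1)) :
    ∫ w in ball (0 : ℂ) 1, g w = ∑' k, ∫ w in annulus (b k) (b (k + 1)), g w := by
  have hU : ⋃ k, annulus (b k) (b (k + 1)) = ball (0 : ℂ) 1 \ {0} :=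
    (iUnion_subset fun k => subset_sdiff_singleton (annulus_subset_ball hb1 k) fun h => h.1 rfl)
      |>.antisymm (ball_sdiff_zero_subset_iUnion_annulus hb0 hbt)
  rw [← setIntegral_congr_set (sdiff_null_ae_eq_self (measure_singleton 0)), ← hU]
  exact integral_iUnion (fun k => measurableSet_annulus _ _) (pairwise_disjoint_annulus hb)
    (hU ▸ hg.mono_set sdiff_subset)

theorem norm_le_of_eqOn_annulus (hb0 : b 0 = 0) (hbt : Tendsto b atTop (𝓝 1))
    (hf : ∀ k, EqOn f (fun w => c k * (w / ‖w‖) ^ m k) (annulus (b k) (b (k + 1))))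
    (hf0 : f 0 = 0) {B : ℝ} (hc : ∀ k, ‖c k‖ ≤ B) : ∀ z ∈ ball (0 : ℂ) 1, ‖f z‖ ≤ B := by
  intro z hz
  rcases eq_or_ne z 0 with rfl | hz0
  · simpa [hf0] using (norm_nonneg _).trans (hc 0)
  obtain ⟨k, hk⟩ := mem_iUnion.1 (ball_sdiff_zero_subset_iUnion_annulus hb0 hbt ⟨hz, hz0⟩)
  have hunit : ‖z / ‖z‖‖ = 1 := by
    rw [norm_div, Complex.norm_real, norm_norm, div_self (norm_ne_zero_iff.2 hz0)]
  rw [hf k hk, norm_mul, norm_pow, hunit, one_pow, mul_one]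
  exact hc k

theorem measurable_indicator_of_eqOn_annulus (hb0 : b 0 = 0) (hb1 : ∀ k, b k < 1)
    (hbt : Tendsto b atTop (𝓝 1))
    (hf : ∀ k, EqOn f (fun w => c k * (w / ‖w‖) ^ m k) (annulus (b k) (b (k + 1))))
    (hf0 : f 0 = 0) : Measurable ((ball (0 : ℂ) 1).indicator f) := by
  refine measurable_of_eqOn_iUnion (fun k => measurableSet_annulus _ _) (fun k => by fun_prop)
    (fun k w hw => (indicator_of_mem (annulus_subset_ball hb1 k hw) f).trans (hf k hw))
    (y := 0) fun w hw => ?_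
  by_cases hw1 : w ∈ ball (0 : ℂ) 1
  · have hw0 : w = 0 := by
      by_contra hw0
      exact hw (ball_sdiff_zero_subset_iUnion_annulus hb0 hbt ⟨hw1, hw0⟩)
    rw [indicator_of_mem hw1, hw0, hf0]
  · exact indicator_of_notMem hw1 f

theorem bergmanCoeff_eq_of_eqOn_annulus (hb0 : b 0 = 0) (hb1 : ∀ k, b k < 1)
    (hbt : Tendsto b atTop (𝓝 1)) (hb : Monotone b) (hm : Injective m)
    (hf : ∀ k, EqOn f (fun w => c k * (w / ‖w‖) ^ m k) (annulus (b k) (b (k + 1))))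
    (hfi : IntegrableOn f (ball (0 : ℂ) 1)) (k : ℕ) :
    bergmanCoeff f (m k) =
      2 * c k * ((∫ r in b k..b (k + 1), ((m k : ℝ) + 1) * r ^ (m k + 1) : ℝ) : ℂ) := by
  have hshell : ∀ i n, ∫ w in annulus (b i) (b (i + 1)), f w * conj w ^ n =
      c i * if m i = n then ((2 * π * ∫ r in b i..b (i + 1), r ^ (n + 1) : ℝ) : ℂ) else 0 := by
    intro i n
    have heq : EqOn (fun w => f w * conj w ^ n) (fun w => c i * ((w / ‖w‖) ^ m i * conj w ^ n))
        (annulus (b i) (b (i + 1))) := fun w hw => by simp only [hf i hw, mul_assoc]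
    rw [setIntegral_congr_fun (measurableSet_annulus _ _) heq, integral_const_mul,
      setIntegral_annulus_div_norm_pow_mul_conj_pow (hb0 ▸ hb i.zero_le) (hb i.le_succ)]
  have hint : IntegrableOn (fun w => f w * conj w ^ m k) (ball (0 : ℂ) 1) :=
    hfi.mul_bdd (by fun_prop) (c := 1) <| ae_restrict_of_forall_mem measurableSet_ball
      fun w hw => by simpa using pow_le_one₀ (norm_nonneg w) (mem_ball_zero_iff.1 hw).le
  rw [bergmanCoeff, integral_ball_eq_tsum_annulus hb0 hb1 hbt hb hint, tsum_eq_single k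
    fun i hi => by rw [hshell, if_neg (hm.ne hi), mul_zero], hshell, if_pos rfl,
    intervalIntegral.integral_const_mul]
  push_cast
  field_simp

end Shells

theorem stmt9 (b : ℕ → ℝ) (m : ℕ → ℕ) (c : ℕ → ℂ)
    (hb0 : b 0 = 0) (hbmono : StrictMono b) (hblt : ∀ j, b j < 1)
    (hbtend : Tendsto b atTop (nhds 1))
    (hmmono : ∀ j : ℕ, 1 ≤ j → m j < m (j + 1))
    (hmint : ∀ j : ℕ, 1 ≤ j →
      (1 : ℝ) / 4 ≤ ∫ r in (b (j - 1))..(b j), ((m j : ℝ) + 1) * r ^ (m j + 1))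
    (hcbd : ∃ B : ℝ, ∀ j, ‖c j‖ ≤ B)
    (hcsum : ¬ Summable (fun j : ℕ => ‖c (j + 1)‖ ^ 2))
    (f : ℂ → ℂ) (hf0 : f 0 = 0)
    (hfval : ∀ z : ℂ, z ≠ 0 → ∀ j : ℕ, 1 ≤ j →
      b (j - 1) ≤ ‖z‖ → ‖z‖ < b j →
      f z = c j * (z / (‖z‖ : ℂ)) ^ (m j)) :
    (∃ B : ℝ, ∀ z ∈ Metric.ball (0 : ℂ) 1, ‖f z‖ ≤ B) ∧
    Measurable ((Metric.ball (0 : ℂ) 1).indicator f) ∧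
    ¬ Summable (fun n : ℕ =>
        ‖iteratedDeriv n (bergman f) 0 / (Nat.factorial n : ℂ)‖ ^ 2) := by
  obtain ⟨B, hB⟩ := hcbd
  have hshell : ∀ k, EqOn f (fun w => c (k + 1) * (w / ‖w‖) ^ m (k + 1))
      (annulus (b k) (b (k + 1))) := fun k w hw =>
    hfval w hw.1 (k + 1) k.succ_pos hw.2.1 hw.2.2
  have hbound := norm_le_of_eqOn_annulus hb0 hbtend hshell hf0 fun k => hB (k + 1)
  have hmeas := measurable_indicator_of_eqOn_annulus hb0 hblt hbtend hshell hf0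
  have hfm : AEStronglyMeasurable f (volume.restrict (ball (0 : ℂ) 1)) :=
    hmeas.aestronglyMeasurable.congr (indicator_ae_eq_restrict measurableSet_ball)
  have hm : StrictMono fun k => m (k + 1) :=
    strictMono_nat_of_lt_succ fun k => hmmono (k + 1) k.succ_pos
  refine ⟨⟨B, hbound⟩, hmeas, fun hsum => hcsum ?_⟩
  simp_rw [iteratedDeriv_bergman_div_factorial hfm hbound] at hsum
  refine .of_nonneg_of_le (fun _ => sq_nonneg _) (fun k => ?_)
    ((hsum.comp_injective hm.injective).mul_left 4)
  have hI := hmint (k + 1) k.succ_pos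
  rw [Nat.add_sub_cancel] at hI
  have hcoeff := bergmanCoeff_eq_of_eqOn_annulus hb0 hblt hbtend hbmono.monotone hm.injective
    hshell ⟨hfm, .restrict_of_bounded (C := B) measure_ball_lt_top
      (ae_restrict_of_forall_mem measurableSet_ball hbound)⟩ k
  rw [comp_apply, hcoeff, norm_mul, norm_mul, Complex.norm_two, Complex.norm_real,
    Real.norm_of_nonneg (by linarith)]
  nlinarith [norm_nonneg (c (k + 1)), mul_le_mul_of_nonneg_left hI (norm_nonneg (c (k + 1)))]
end

section
/- Let p > 1. Then lim_{r → 1⁻} (1 − r²)^{p−1} · (1/(2π)) ∫₀^{2π} 1/|1 − r e^{iθ}|^p dθ = Γ(p−1)/Γ(p/2)², where Γ is the Gamma function. -/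
/-!
Since `|1 - r e^{iθ}|² = (1 - r)² + 4 r sin²(θ/2)`, the substitution `θ = (1 - r) s` on the period
`[-π, π]` turns `(1 - r²)^{p-1} ∫ |1 - r e^{iθ}|^{-p} dθ` into
`(1 + r)^{p-1} ∫_{|s| ≤ π/(1-r)} (1 + r s² sinc²((1 - r) s / 2))^{-p/2} ds`.
Jordan's inequality `sinc x ≥ 2/π` on `[-π/2, π/2]` gives the integrable majorant
`(1 + s²/π²)^{-p/2}`, so by dominated convergence this tends to `2^{p-1} ∫_ℝ (1 + s²)^{-p/2} ds`.
The substitution `t = 1/(1 + s²)` identifies the last integral with `B(1/2, (p-1)/2)`, and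
Legendre's duplication formula turns the result into `Γ(p-1)/Γ(p/2)²`.
-/

open MeasureTheory Set Filter Real Topology

lemma Real.sin_eq_mul_sinc (x : ℝ) : sin x = x * sinc x := by
  rcases eq_or_ne x 0 with rfl | hx
  · simp
  · rw [sinc_of_ne_zero hx, mul_div_cancel₀ _ hx]

lemma Real.four_div_pi_sq_le_sinc_sq {x : ℝ} (hx : |x| ≤ π / 2) : 4 / π ^ 2 ≤ sinc x ^ 2 := by
  rcases eq_or_ne x 0 with rfl | hx0
  · rw [sinc_zero, one_pow, div_le_one (by positivity)]
    nlinarith [pi_gt_three]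
  · have h := mul_abs_le_abs_sin hx
    rw [sinc_of_ne_zero hx0, div_pow, ← sq_abs (sin x), le_div_iff₀ (by positivity), ← sq_abs x]
    calc 4 / π ^ 2 * |x| ^ 2 = (2 / π * |x|) ^ 2 := by ring
      _ ≤ |sin x| ^ 2 := by gcongr

lemma norm_one_sub_ofReal_mul_exp_sq (r θ : ℝ) :
    ‖1 - (r : ℂ) * Complex.exp (θ * Complex.I)‖ ^ 2 = (1 - r) ^ 2 + 4 * r * sin (θ / 2) ^ 2 := by
  rw [Complex.sq_norm, Complex.normSq_apply]
  simp only [Complex.sub_re, Complex.sub_im, Complex.mul_re, Complex.mul_im,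
    Complex.exp_ofReal_mul_I_re, Complex.exp_ofReal_mul_I_im, Complex.one_re,
    Complex.one_im, Complex.ofReal_re, Complex.ofReal_im]
  have h := cos_two_mul' (θ / 2)
  rw [mul_div_cancel₀ _ two_ne_zero] at h
  linear_combination (r ^ 2) * sin_sq_add_cos_sq θ - 2 * r * h - 2 * r * sin_sq_add_cos_sq (θ / 2)

lemma one_div_norm_one_sub_ofReal_mul_exp_rpow (p r θ : ℝ) :
    1 / ‖1 - (r : ℂ) * Complex.exp (θ * Complex.I)‖ ^ p
      = ((1 - r) ^ 2 + 4 * r * sin (θ / 2) ^ 2) ^ (-(p / 2)) := by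
  rw [← norm_one_sub_ofReal_mul_exp_sq, ← rpow_natCast, ← rpow_mul (norm_nonneg _), mul_neg,
    rpow_neg (norm_nonneg _), one_div,
    Nat.cast_ofNat, mul_div_cancel₀ p two_ne_zero]

/-- `|1 - r e^{iθ}|^{-p}` at `θ = (1 - r) s`, multiplied by `(1 - r)^p`. -/
noncomputable def rescaledKernel (p r s : ℝ) : ℝ :=
  (1 + r * s ^ 2 * sinc ((1 - r) * s / 2) ^ 2) ^ (-(p / 2))

lemma rescaledKernel_nonneg (p : ℝ) {r : ℝ} (hr : 0 ≤ r) (s : ℝ) : 0 ≤ rescaledKernel p r s :=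
  rpow_nonneg (by positivity) _

lemma one_sub_sq_add_four_mul_sin_sq_rpow_eq (p : ℝ) {r : ℝ} (hr0 : 0 ≤ r) (hr1 : r ≤ 1) (s : ℝ) :
    ((1 - r) ^ 2 + 4 * r * sin ((1 - r) * s / 2) ^ 2) ^ (-(p / 2))
      = (1 - r) ^ (-p) * rescaledKernel p r s := by
  have hsplit : (1 - r) ^ 2 + 4 * r * sin ((1 - r) * s / 2) ^ 2
      = (1 - r) ^ 2 * (1 + r * s ^ 2 * sinc ((1 - r) * s / 2) ^ 2) := by
    rw [sin_eq_mul_sinc]; ring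
  rw [hsplit, rescaledKernel, mul_rpow (by positivity) (by positivity), ← rpow_natCast,
    ← rpow_mul (by linarith), Nat.cast_ofNat, mul_neg, mul_div_cancel₀ p two_ne_zero]

lemma integral_one_div_norm_one_sub_ofReal_mul_exp_rpow (p : ℝ) {r : ℝ} (hr0 : 0 ≤ r)
    (hr1 : r < 1) :
    ∫ θ in (0 : ℝ)..2 * π, 1 / ‖1 - (r : ℂ) * Complex.exp (θ * Complex.I)‖ ^ p
      = (1 - r) ^ (1 - p) * ∫ s in -(π / (1 - r))..π / (1 - r), rescaledKernel p r s := by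
  have hε : 0 < 1 - r := by linarith
  let g : ℝ → ℝ := fun θ => ((1 - r) ^ 2 + 4 * r * sin (θ / 2) ^ 2) ^ (-(p / 2))
  have hg : Function.Periodic g (2 * π) := fun θ => by
    simp only [g, add_div, mul_div_cancel_left₀ π two_ne_zero, sin_add_pi, neg_sq]
  have hshift := hg.intervalIntegral_add_eq 0 (-π)
  rw [zero_add, show -π + 2 * π = π by ring] at hshift
  calc ∫ θ in (0 : ℝ)..2 * π, 1 / ‖1 - (r : ℂ) * Complex.exp (θ * Complex.I)‖ ^ p
      = ∫ θ in -π..π, g θ := by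
        simp only [one_div_norm_one_sub_ofReal_mul_exp_rpow, g, hshift]
    _ = (1 - r) * ∫ s in -(π / (1 - r))..π / (1 - r), g ((1 - r) * s) := by
        rw [intervalIntegral.integral_comp_mul_left _ hε.ne', smul_eq_mul, mul_neg,
          mul_div_cancel₀ _ hε.ne', mul_inv_cancel_left₀ hε.ne']
    _ = (1 - r) * ∫ s in -(π / (1 - r))..π / (1 - r), (1 - r) ^ (-p) * rescaledKernel p r s := by
        simp only [g, one_sub_sq_add_four_mul_sin_sq_rpow_eq p hr0 hr1.le]
    _ = (1 - r) ^ (1 - p) * ∫ s in -(π / (1 - r))..π / (1 - r), rescaledKernel p r s := by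
        rw [intervalIntegral.integral_const_mul, ← mul_assoc, sub_eq_add_neg 1 p, rpow_add hε,
          rpow_one]

lemma one_sub_sq_rpow_mul_integral_eq (p : ℝ) {r : ℝ} (hr0 : 0 ≤ r) (hr1 : r < 1) :
    (1 - r ^ 2) ^ (p - 1)
        * ∫ θ in (0 : ℝ)..2 * π, 1 / ‖1 - (r : ℂ) * Complex.exp (θ * Complex.I)‖ ^ p
      = (1 + r) ^ (p - 1) * ∫ s in -(π / (1 - r))..π / (1 - r), rescaledKernel p r s := by
  have hε : 0 < 1 - r := by linarith
  rw [integral_one_div_norm_one_sub_ofReal_mul_exp_rpow p hr0 hr1,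
    show 1 - r ^ 2 = (1 + r) * (1 - r) by ring, mul_rpow (by linarith) hε.le, mul_assoc,
    ← mul_assoc ((1 - r) ^ (p - 1)), ← rpow_add hε]
  norm_num

lemma rescaledKernel_le {p r s : ℝ} (hp : 0 ≤ p) (hr : 1 / 4 ≤ r) (hs : |(1 - r) * s| ≤ π) :
    rescaledKernel p r s ≤ (1 + (π⁻¹ * s) ^ 2) ^ (-(p / 2)) := by
  have hsinc : 4 / π ^ 2 ≤ sinc ((1 - r) * s / 2) ^ 2 := by
    apply four_div_pi_sq_le_sinc_sq
    rw [abs_div, abs_two]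
    linarith
  refine rpow_le_rpow_of_nonpos (by positivity) ?_ (by linarith)
  calc 1 + (π⁻¹ * s) ^ 2 = 1 + 1 / 4 * s ^ 2 * (4 / π ^ 2) := by ring
    _ ≤ 1 + r * s ^ 2 * sinc ((1 - r) * s / 2) ^ 2 := by gcongr

lemma tendsto_rescaledKernel (p s : ℝ) :
    Tendsto (fun r => rescaledKernel p r s) (𝓝 1) (𝓝 ((1 + s ^ 2) ^ (-(p / 2)))) := by
  have hbase : Tendsto (fun r => 1 + r * s ^ 2 * sinc ((1 - r) * s / 2) ^ 2) (𝓝 1)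
      (𝓝 (1 + s ^ 2)) := by
    have hc : Continuous fun r : ℝ => 1 + r * s ^ 2 * sinc ((1 - r) * s / 2) ^ 2 := by
      have := continuous_sinc; fun_prop
    simpa using hc.tendsto 1
  exact hbase.rpow_const (Or.inl (by positivity))

lemma eventually_mem_Ioc_div_one_sub (s : ℝ) :
    ∀ᶠ r in 𝓝[<] (1 : ℝ), s ∈ Ioc (-(π / (1 - r))) (π / (1 - r)) := by
  have hsmall : ∀ᶠ r in 𝓝 (1 : ℝ), (1 - r) * |s| < π := by
    have hc : Continuous fun r : ℝ => (1 - r) * |s| := by fun_prop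
    have : Tendsto (fun r : ℝ => (1 - r) * |s|) (𝓝 1) (𝓝 0) := by simpa using hc.tendsto 1
    exact this.eventually (gt_mem_nhds pi_pos)
  filter_upwards [nhdsWithin_le_nhds hsmall, self_mem_nhdsWithin] with r hr hr1
  have hε : 0 < 1 - r := sub_pos.mpr hr1
  have habs : |s| < π / (1 - r) := by rw [lt_div_iff₀ hε]; linarith
  exact ⟨by linarith [neg_abs_le s], by linarith [le_abs_self s]⟩

lemma tendsto_integral_rescaledKernel {p : ℝ} (hp : 1 < p) :
    Tendsto (fun r => ∫ s in -(π / (1 - r))..π / (1 - r), rescaledKernel p r s) (𝓝[<] 1)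
      (𝓝 (∫ s, (1 + s ^ 2) ^ (-(p / 2)))) := by
  have hr : ∀ᶠ r in 𝓝[<] (1 : ℝ), r ∈ Ioo (1 / 4) 1 := Ioo_mem_nhdsLT (by norm_num)
  have hbound : Integrable (fun s : ℝ => (1 + (π⁻¹ * s) ^ 2) ^ (-(p / 2))) := by
    have h := integrable_rpow_neg_one_add_norm_sq (E := ℝ) (μ := volume) (r := p)
      (by simpa using hp)
    convert h.comp_mul_left' (inv_ne_zero pi_ne_zero) using 3 with s
    · rw [norm_eq_abs, sq_abs]
    · rw [neg_div]
  refine (tendsto_integral_filter_of_dominated_convergence _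
    (F := fun r => (Ioc (-(π / (1 - r))) (π / (1 - r))).indicator (rescaledKernel p r))
    (Eventually.of_forall fun r => ?_) (hr.mono fun r hr => ae_of_all _ fun s => ?_) hbound
    (ae_of_all _ fun s => ?_)).congr' ?_
  · have hK : Measurable (rescaledKernel p r) := by unfold rescaledKernel; fun_prop
    exact (hK.indicator measurableSet_Ioc).aestronglyMeasurable
  · have hK := rescaledKernel_nonneg p (by linarith [hr.1] : 0 ≤ r)
    rw [norm_of_nonneg (indicator_nonneg (fun s _ => hK s) s)]
    by_cases hs : s ∈ Ioc (-(π / (1 - r))) (π / (1 - r))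
    · rw [indicator_of_mem hs]
      refine rescaledKernel_le (by linarith) hr.1.le ?_
      rw [abs_mul, abs_of_pos (sub_pos.mpr hr.2), ← le_div_iff₀' (sub_pos.mpr hr.2)]
      exact abs_le.mpr ⟨hs.1.le, hs.2⟩
    · rw [indicator_of_notMem hs]
      positivity
  · refine ((tendsto_rescaledKernel p s).mono_left nhdsWithin_le_nhds).congr' ?_
    filter_upwards [eventually_mem_Ioc_div_one_sub s] with r hs
    rw [indicator_of_mem hs]
  · filter_upwards [hr] with r hr
    rw [integral_indicator measurableSet_Ioc, intervalIntegral.integral_of_le]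
    have := div_pos pi_pos (sub_pos.mpr hr.2)
    linarith

lemma integral_Ioo_rpow_mul_one_sub_rpow {a b : ℝ} (ha : 0 < a) (hb : 0 < b) :
    ∫ t in Ioo (0 : ℝ) 1, t ^ (a - 1) * (1 - t) ^ (b - 1) = Gamma a * Gamma b / Gamma (a + b) := by
  have hofReal : ∀ t ∈ Ioo (0 : ℝ) 1, (t : ℂ) ^ ((a : ℂ) - 1) * (1 - (t : ℂ)) ^ ((b : ℂ) - 1)
      = ((t ^ (a - 1) * (1 - t) ^ (b - 1) : ℝ) : ℂ) := fun t ht => by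
    rw [Complex.ofReal_mul, Complex.ofReal_cpow ht.1.le, Complex.ofReal_cpow (sub_pos.mpr ht.2).le]
    push_cast; rfl
  rw [← ProbabilityTheory.beta, ProbabilityTheory.beta_eq_betaIntegralReal a b ha hb,
    Complex.betaIntegral, intervalIntegral.integral_of_le zero_le_one,
    integral_Ioc_eq_integral_Ioo, setIntegral_congr_fun measurableSet_Ioo hofReal,
    integral_complex_ofReal, Complex.ofReal_re]

lemma image_inv_one_add_sq_Ioi : (fun s : ℝ => (1 + s ^ 2)⁻¹) '' Ioi 0 = Ioo 0 1 := by
  ext t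
  constructor
  · rintro ⟨s, hs, rfl⟩
    have : 1 < 1 + s ^ 2 := by have := pow_pos (mem_Ioi.mp hs) 2; linarith
    exact ⟨by positivity, inv_lt_one_of_one_lt₀ this⟩
  · rintro ⟨ht0, ht1⟩
    have hpos : 0 < t⁻¹ - 1 := sub_pos.mpr (one_lt_inv₀ ht0 |>.mpr ht1)
    refine ⟨√(t⁻¹ - 1), sqrt_pos.mpr hpos, ?_⟩
    simp only [sq_sqrt hpos.le, add_sub_cancel, inv_inv]

lemma strictAntiOn_inv_one_add_sq : StrictAntiOn (fun s : ℝ => (1 + s ^ 2)⁻¹) (Ici 0) :=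
  fun x hx y _ hxy => inv_strictAnti₀ (by positivity) (by gcongr)

lemma hasDerivAt_inv_one_add_sq (s : ℝ) :
    HasDerivAt (fun s : ℝ => (1 + s ^ 2)⁻¹) (-(2 * s) / (1 + s ^ 2) ^ 2) s := by
  simpa using ((hasDerivAt_pow 2 s).const_add 1).fun_inv (by positivity)

lemma abs_deriv_mul_beta_integrand_inv_one_add_sq {q s : ℝ} (hs : 0 < s) :
    |-(2 * s) / (1 + s ^ 2) ^ 2|
        * ((1 + s ^ 2)⁻¹ ^ ((q - 1) / 2 - 1) * (1 - (1 + s ^ 2)⁻¹) ^ ((1 : ℝ) / 2 - 1))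
      = 2 * (1 + s ^ 2) ^ (-(q / 2)) := by
  set u := 1 + s ^ 2
  have hu0 : 0 < u := by positivity
  have h1 : 1 - u⁻¹ = s ^ (2 : ℝ) * u ^ (-1 : ℝ) := by
    rw [rpow_neg_one, rpow_two]; field_simp; ring
  rw [abs_div, abs_neg, abs_of_pos (by positivity), abs_of_pos (by positivity), h1,
    mul_rpow (by positivity) (by positivity), ← rpow_mul hs.le, ← rpow_mul hu0.le,
    inv_rpow hu0.le, ← rpow_neg hu0.le]
  have hexp : u ^ (1 - (q - 1) / 2) * u ^ (1 / 2 : ℝ) = u ^ (-(q / 2)) * u ^ 2 := by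
    rw [← rpow_add hu0, ← rpow_natCast, ← rpow_add hu0]
    ring_nf
  calc _ = 2 * (s * s⁻¹) * (u ^ (1 - (q - 1) / 2) * u ^ (1 / 2 : ℝ)) / u ^ 2 := by
        norm_num [rpow_neg_one]; ring
    _ = 2 * u ^ (-(q / 2)) := by
        rw [mul_inv_cancel₀ hs.ne', hexp]; field_simp

lemma integral_Ioi_one_add_sq_rpow_neg {q : ℝ} (hq : 1 < q) :
    ∫ s in Ioi (0 : ℝ), (1 + s ^ 2) ^ (-(q / 2))
      = √π * Gamma ((q - 1) / 2) / (2 * Gamma (q / 2)) := by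
  have hsub := integral_image_eq_integral_abs_deriv_smul measurableSet_Ioi
    (fun s _ => (hasDerivAt_inv_one_add_sq s).hasDerivWithinAt)
    (strictAntiOn_inv_one_add_sq.injOn.mono Ioi_subset_Ici_self)
    (fun t => t ^ ((q - 1) / 2 - 1) * (1 - t) ^ ((1 : ℝ) / 2 - 1))
  rw [image_inv_one_add_sq_Ioi, integral_Ioo_rpow_mul_one_sub_rpow (by linarith) one_half_pos,
    Gamma_one_half_eq, show (q - 1) / 2 + 1 / 2 = q / 2 by ring] at hsub
  simp only [smul_eq_mul] at hsub
  rw [setIntegral_congr_fun measurableSet_Ioi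
      fun s hs => abs_deriv_mul_beta_integrand_inv_one_add_sq hs, integral_const_mul] at hsub
  have hΓ : Gamma (q / 2) ≠ 0 := (Gamma_pos_of_pos (by linarith)).ne'
  rw [div_eq_iff hΓ] at hsub
  rw [eq_div_iff (mul_ne_zero two_ne_zero hΓ)]
  linear_combination -hsub

lemma integral_one_add_sq_rpow_neg {q : ℝ} (hq : 1 < q) :
    ∫ s, (1 + s ^ 2) ^ (-(q / 2)) = √π * Gamma ((q - 1) / 2) / Gamma (q / 2) := by
  have h := integral_comp_abs (f := fun s => (1 + s ^ 2) ^ (-(q / 2)))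
  simp only [sq_abs] at h
  rw [h, integral_Ioi_one_add_sq_rpow_neg hq]
  have hΓ : Gamma (q / 2) ≠ 0 := (Gamma_pos_of_pos (by linarith)).ne'
  field_simp

lemma Gamma_sub_one_div_Gamma_half_sq (p : ℝ) :
    Gamma (p - 1) / Gamma (p / 2) ^ 2
      = 1 / (2 * π) * (2 ^ (p - 1) * (√π * Gamma ((p - 1) / 2) / Gamma (p / 2))) := by
  rcases eq_or_ne (Gamma (p / 2)) 0 with hΓ | hΓ
  · simp [hΓ]
  have hdup := Gamma_mul_Gamma_add_half ((p - 1) / 2)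
  rw [show (p - 1) / 2 + 1 / 2 = p / 2 by ring, show 2 * ((p - 1) / 2) = p - 1 by ring] at hdup
  have hpow : (2 : ℝ) ^ (p - 1) * 2 ^ (1 - (p - 1)) = 2 := by
    rw [← rpow_add two_pos]; norm_num
  have hsqrt : √π * √π = π := mul_self_sqrt pi_pos.le
  field_simp
  linear_combination -(2 ^ (p - 1) * √π) * hdup - Gamma (p - 1) * √π * √π * hpow
    - 2 * Gamma (p - 1) * hsqrt

theorem stmt13 (p : ℝ) (hp : 1 < p) :
    Tendsto
      (fun r : ℝ => (1 - r ^ 2) ^ (p - 1) *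
        ((1 / (2 * Real.pi)) *
          ∫ θ in (0:ℝ)..(2 * Real.pi),
            1 / ‖1 - (r : ℂ) * Complex.exp ((θ : ℂ) * Complex.I)‖ ^ p))
      (nhdsWithin 1 (Iio (1:ℝ)))
      (nhds (Real.Gamma (p - 1) / (Real.Gamma (p / 2)) ^ 2)) := by
  have hpow : Tendsto (fun r : ℝ => (1 + r) ^ (p - 1)) (𝓝[<] 1) (𝓝 (2 ^ (p - 1))) := by
    have hc : ContinuousAt (fun r : ℝ => (1 + r) ^ (p - 1)) 1 := by fun_prop (disch := norm_num)
    simpa [one_add_one_eq_two] using hc.tendsto.mono_left nhdsWithin_le_nhds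
  have hlim := ((hpow.mul (tendsto_integral_rescaledKernel hp)).const_mul (1 / (2 * π)))
  rw [integral_one_add_sq_rpow_neg hp, ← Gamma_sub_one_div_Gamma_half_sq] at hlim
  refine hlim.congr' ?_
  filter_upwards [Ioo_mem_nhdsLT zero_lt_one] with r hr
  rw [← one_sub_sq_rpow_mul_integral_eq p hr.1.le hr.2, mul_left_comm]
end

section
/- Suppose s < 1, m + s > 1, k > −1, and additionally 2 + k > s + m and 2 + k > s. Then for every x with 0 ≤ x < 1, ∫₀¹ (1 − y)^{−s} y^k / (1 − x y)^m dy ≤ (Γ(s+m−1) Γ(1−s)/Γ(m)) · (1 − x)^{1−s−m}, where Γ is the Gamma function. -/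
/-! The substitution `y = (1 - u) / (1 - x u)`, an involution of `(0, 1)` with Jacobian
`(1 - x) / (1 - x u)²`, turns the integral into
`(1 - x)^(1-s-m) ∫₀¹ u^(-s) (1 - u)^k (1 - x u)^(s+m-k-2) du`.
Since `s + m - k - 2 < 0` and `1 - x u ≥ 1 - u`, the last factor is at most
`(1 - u)^(s+m-k-2)`, which leaves the Beta integral
`B(1 - s, s + m - 1) = Γ(1 - s) Γ(s + m - 1) / Γ(m)`. -/

open MeasureTheory Set

section Beta

variable {a b : ℝ}

lemma ofReal_rpow_mul_one_sub_rpow {t : ℝ} (ht : t ∈ Icc (0 : ℝ) 1) (a b : ℝ) :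
    ((t ^ (a - 1) * (1 - t) ^ (b - 1) : ℝ) : ℂ) =
      (t : ℂ) ^ ((a : ℂ) - 1) * (1 - (t : ℂ)) ^ ((b : ℂ) - 1) := by
  rw [Complex.ofReal_mul, Complex.ofReal_cpow ht.1, Complex.ofReal_cpow (sub_nonneg.2 ht.2)]
  push_cast
  rfl

lemma integrableOn_rpow_mul_one_sub_rpow (ha : 0 < a) (hb : 0 < b) :
    IntegrableOn (fun t : ℝ => t ^ (a - 1) * (1 - t) ^ (b - 1)) (Ioo 0 1) := by
  have h := Complex.betaIntegral_convergent (u := a) (v := b) (by simpa) (by simpa)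
  rw [intervalIntegrable_iff_integrableOn_Ioo_of_le zero_le_one] at h
  refine IntegrableOn.congr_fun h.re (fun t ht => ?_) measurableSet_Ioo
  rw [← ofReal_rpow_mul_one_sub_rpow (Ioo_subset_Icc_self ht), RCLike.re_to_complex,
    Complex.ofReal_re]

lemma integral_rpow_mul_one_sub_rpow (ha : 0 < a) (hb : 0 < b) :
    ∫ t in Ioo (0 : ℝ) 1, t ^ (a - 1) * (1 - t) ^ (b - 1) =
      Real.Gamma a * Real.Gamma b / Real.Gamma (a + b) := by
  have h := Complex.betaIntegral_eq_Gamma_mul_div a b (by simpa) (by simpa)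
  rw [Complex.betaIntegral, intervalIntegral.integral_of_le zero_le_one,
    integral_Ioc_eq_integral_Ioo, ← setIntegral_congr_fun measurableSet_Ioo
      (fun t ht => ofReal_rpow_mul_one_sub_rpow (Ioo_subset_Icc_self ht) a b),
    integral_complex_ofReal, ← Complex.ofReal_add, Complex.Gamma_ofReal, Complex.Gamma_ofReal,
    Complex.Gamma_ofReal] at h
  exact_mod_cast h

end Beta

noncomputable def moebiusSwap (x u : ℝ) : ℝ := (1 - u) / (1 - x * u)

section MoebiusSwap

variable {x u : ℝ}

lemma one_sub_lt_one_sub_mul (hx : x < 1) (hu : 0 < u) : 1 - u < 1 - x * u := by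
  nlinarith

lemma one_sub_mul_pos_of_mem_Ioo (hx : x < 1) (hu : u ∈ Ioo (0 : ℝ) 1) : 0 < 1 - x * u := by
  linarith [one_sub_lt_one_sub_mul hx hu.1, hu.2]

lemma one_sub_moebiusSwap (h : 1 - x * u ≠ 0) :
    1 - moebiusSwap x u = u * (1 - x) / (1 - x * u) := by
  rw [moebiusSwap, eq_div_iff h, sub_mul, div_mul_cancel₀ _ h]; ring

lemma one_sub_mul_moebiusSwap (h : 1 - x * u ≠ 0) :
    1 - x * moebiusSwap x u = (1 - x) / (1 - x * u) := by
  rw [moebiusSwap, eq_div_iff h, sub_mul, mul_assoc, div_mul_cancel₀ _ h]; ring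

lemma moebiusSwap_moebiusSwap (hx : x ≠ 1) (h : 1 - x * u ≠ 0) :
    moebiusSwap x (moebiusSwap x u) = u := by
  have : 1 - x ≠ 0 := sub_ne_zero.2 hx.symm
  rw [moebiusSwap, one_sub_moebiusSwap h, one_sub_mul_moebiusSwap h, div_div_div_cancel_right₀ h,
    mul_div_assoc, div_self this, mul_one]

lemma moebiusSwap_mem_Ioo (hx : x < 1) (hu : u ∈ Ioo (0 : ℝ) 1) :
    moebiusSwap x u ∈ Ioo 0 1 := by
  have hD := one_sub_mul_pos_of_mem_Ioo hx hu
  exact ⟨div_pos (by linarith [hu.2]) hD, (div_lt_one hD).2 (one_sub_lt_one_sub_mul hx hu.1)⟩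

lemma bijOn_moebiusSwap (hx : x < 1) : BijOn (moebiusSwap x) (Ioo 0 1) (Ioo 0 1) := by
  have hinv : LeftInvOn (moebiusSwap x) (moebiusSwap x) (Ioo 0 1) := fun u hu =>
    moebiusSwap_moebiusSwap hx.ne (one_sub_mul_pos_of_mem_Ioo hx hu).ne'
  exact InvOn.bijOn ⟨hinv, hinv⟩ (fun u hu => moebiusSwap_mem_Ioo hx hu)
    (fun u hu => moebiusSwap_mem_Ioo hx hu)

lemma hasDerivAt_moebiusSwap (h : 1 - x * u ≠ 0) :
    HasDerivAt (moebiusSwap x) ((x - 1) / (1 - x * u) ^ 2) u := by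
  refine (((hasDerivAt_id' u).const_sub 1).div
    (((hasDerivAt_id' u).const_mul x).const_sub 1) h).congr_deriv ?_
  ring

lemma setIntegral_Ioo_comp_moebiusSwap {E : Type*} [NormedAddCommGroup E] [NormedSpace ℝ E]
    (hx : x < 1) (f : ℝ → E) :
    ∫ u in Ioo (0 : ℝ) 1, ((1 - x) / (1 - x * u) ^ 2) • f (moebiusSwap x u) =
      ∫ y in Ioo (0 : ℝ) 1, f y := by
  conv_rhs => rw [← (bijOn_moebiusSwap hx).image_eq]
  rw [integral_image_eq_integral_abs_deriv_smul measurableSet_Ioo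
    (fun u hu => (hasDerivAt_moebiusSwap (one_sub_mul_pos_of_mem_Ioo hx hu).ne').hasDerivWithinAt)
    (bijOn_moebiusSwap hx).injOn]
  refine setIntegral_congr_fun measurableSet_Ioo (fun u hu => ?_)
  have hD := one_sub_mul_pos_of_mem_Ioo hx hu
  rw [abs_div, abs_of_neg (by linarith), abs_of_pos (by positivity), neg_sub]

lemma jacobian_mul_integrand_moebiusSwap (hx : x < 1) (hu : u ∈ Ioo (0 : ℝ) 1) (s m k : ℝ) :
    (1 - x) / (1 - x * u) ^ 2 *
        ((1 - moebiusSwap x u) ^ (-s) * moebiusSwap x u ^ k / (1 - x * moebiusSwap x u) ^ m) =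
      (1 - x) ^ (1 - s - m) * (u ^ (-s) * ((1 - u) ^ k * (1 - x * u) ^ (s + m - k - 2))) := by
  have h1x : 0 < 1 - x := sub_pos.2 hx
  have h1u : 0 < 1 - u := sub_pos.2 hu.2
  have hD := one_sub_mul_pos_of_mem_Ioo hx hu
  rw [one_sub_moebiusSwap hD.ne', one_sub_mul_moebiusSwap hD.ne', moebiusSwap,
    Real.div_rpow (by positivity [hu.1]) hD.le, Real.div_rpow h1u.le hD.le,
    Real.div_rpow h1x.le hD.le, Real.mul_rpow hu.1.le h1x.le, Real.rpow_sub h1x, Real.rpow_sub h1x,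
    Real.rpow_sub hD, Real.rpow_sub hD, Real.rpow_add hD, Real.rpow_neg hu.1.le,
    Real.rpow_neg h1x.le, Real.rpow_neg hD.le, Real.rpow_one, Real.rpow_two]
  field_simp

lemma one_sub_rpow_mul_one_sub_mul_rpow_le (hx : x < 1) (hu : u ∈ Ioo (0 : ℝ) 1) (k : ℝ)
    {e : ℝ} (he : e ≤ 0) : (1 - u) ^ k * (1 - x * u) ^ e ≤ (1 - u) ^ (k + e) := by
  have h1u : 0 < 1 - u := sub_pos.2 hu.2
  rw [Real.rpow_add h1u]
  exact mul_le_mul_of_nonneg_left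
    (Real.rpow_le_rpow_of_nonpos h1u (one_sub_lt_one_sub_mul hx hu.1).le he) (by positivity)

end MoebiusSwap

theorem stmt14_general (s m k : ℝ) (hs : s < 1) (hms : 1 < m + s)
    (h1 : s + m < 2 + k) (x : ℝ) (hx1 : x < 1) :
    ∫ y in (0:ℝ)..1, (1 - y) ^ (-s) * y ^ k / (1 - x * y) ^ m ≤
      (Real.Gamma (s + m - 1) * Real.Gamma (1 - s) / Real.Gamma m) *
        (1 - x) ^ (1 - s - m) := by
  calc ∫ y in (0:ℝ)..1, (1 - y) ^ (-s) * y ^ k / (1 - x * y) ^ m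
      = ∫ y in Ioo (0:ℝ) 1, (1 - y) ^ (-s) * y ^ k / (1 - x * y) ^ m := by
        rw [intervalIntegral.integral_of_le zero_le_one, integral_Ioc_eq_integral_Ioo]
    _ = ∫ u in Ioo (0:ℝ) 1,
          (1 - x) ^ (1 - s - m) * (u ^ (-s) * ((1 - u) ^ k * (1 - x * u) ^ (s + m - k - 2))) := by
        rw [← setIntegral_Ioo_comp_moebiusSwap hx1]
        exact setIntegral_congr_fun measurableSet_Ioo
          fun u hu => jacobian_mul_integrand_moebiusSwap hx1 hu s m k
    _ ≤ ∫ u in Ioo (0:ℝ) 1,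
          (1 - x) ^ (1 - s - m) * (u ^ ((1 - s) - 1) * (1 - u) ^ ((s + m - 1) - 1)) := by
        refine integral_mono_of_nonneg ?_
          ((integrableOn_rpow_mul_one_sub_rpow (by linarith) (by linarith)).const_mul _) ?_
        all_goals filter_upwards [ae_restrict_mem measurableSet_Ioo] with u hu
        · have h1u : 0 < 1 - u := sub_pos.2 hu.2
          have hD := one_sub_mul_pos_of_mem_Ioo hx1 hu
          positivity [hu.1]
        · have := one_sub_rpow_mul_one_sub_mul_rpow_le hx1 hu k (e := s + m - k - 2) (by linarith)
          rw [show k + (s + m - k - 2) = (s + m - 1) - 1 by ring] at this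
          rw [show (1 - s) - 1 = -s by ring]
          gcongr
          exact Real.rpow_nonneg hu.1.le _
    _ = (Real.Gamma (s + m - 1) * Real.Gamma (1 - s) / Real.Gamma m) * (1 - x) ^ (1 - s - m) := by
        rw [integral_const_mul, integral_rpow_mul_one_sub_rpow (by linarith) (by linarith),
          show (1 - s) + (s + m - 1) = m by ring]
        ring

theorem stmt14 (s m k : ℝ) (hs : s < 1) (hms : 1 < m + s) (hk : -1 < k)
    (h1 : s + m < 2 + k) (h2 : s < 2 + k) (x : ℝ) (hx0 : 0 ≤ x) (hx1 : x < 1) :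
    ∫ y in (0:ℝ)..1, (1 - y) ^ (-s) * y ^ k / (1 - x * y) ^ m ≤
      (Real.Gamma (s + m - 1) * Real.Gamma (1 - s) / Real.Gamma m) *
        (1 - x) ^ (1 - s - m) :=
  stmt14_general s m k hs hms h1 x hx1
end

section
/- Suppose s < 1, m + s > 1, and k > −1. Then there exists a finite constant C, depending only on s, m, and k, such that for every x with 0 ≤ x < 1, ∫₀¹ (1 − y)^{−s} y^k / (1 − x y)^m dy ≤ C (1 − x)^{1−s−m}. -/
open MeasureTheory Set intervalIntegral

/-!
Write the integrand as `y ^ k` times the kernel `(1 - y) ^ (-s) / (1 - x * y) ^ m`. The kernel is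
bounded on `[0, 1/2]` and `y ^ k` is bounded on `[1/2, 1]`, so the integral is at most a constant
times `∫ y ^ k` plus a constant times the integral of the kernel. Split the latter at `y = x`:
below `x` we have `1 - x * y ≥ 1 - y`, so the kernel is at most `(1 - y) ^ (-(s + m))`, whose
integral is at most `(1 - x) ^ (1 - s - m) / (s + m - 1)`; above `x`, `1 - x * y ≥ 1 - x` gives
`(1 - x) ^ (1 - s - m) / (1 - s)`. Since `1 - s - m < 0`, the factor `(1 - x) ^ (1 - s - m) ≥ 1`
also absorbs the constant term.
-/

lemma Real.rpow_le_max_one_rpow {a y : ℝ} (k : ℝ) (ha : 0 < a) (hay : a ≤ y) (hy : y ≤ 1) :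
    y ^ k ≤ max 1 (a ^ k) := by
  rcases le_total 0 k with hk | hk
  · exact (Real.rpow_le_one (ha.le.trans hay) hy hk).trans (le_max_left _ _)
  · exact (Real.rpow_le_rpow_of_nonpos ha hay hk).trans (le_max_right _ _)

lemma mul_le_add_mul_of_le_or_le {u v A B : ℝ} (hu : 0 ≤ u) (hv : 0 ≤ v) (hA : 0 ≤ A)
    (hB : 0 ≤ B) (h : u ≤ A ∨ v ≤ B) : u * v ≤ A * v + B * u := by
  rcases h with h | h
  · nlinarith [mul_le_mul_of_nonneg_right h hv, mul_nonneg hB hu]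
  · nlinarith [mul_le_mul_of_nonneg_left h hu, mul_nonneg hA hv]

lemma intervalIntegral.integral_mono_on_of_nonneg {f g : ℝ → ℝ} {a b : ℝ} (hab : a ≤ b)
    (hg : IntervalIntegrable g volume a b) (hf : ∀ x ∈ Icc a b, 0 ≤ f x)
    (hfg : ∀ x ∈ Icc a b, f x ≤ g x) : ∫ x in a..b, f x ≤ ∫ x in a..b, g x := by
  rw [integral_of_le hab, integral_of_le hab]
  refine integral_mono_of_nonneg ?_ hg.1 ?_ <;>
    filter_upwards [ae_restrict_mem measurableSet_Ioc] with x hx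
  exacts [hf x (Ioc_subset_Icc_self hx), hfg x (Ioc_subset_Icc_self hx)]

lemma integral_one_sub_rpow {a b r : ℝ} (h : -1 < r ∨ r ≠ -1 ∧ (0 : ℝ) ∉ uIcc (1 - b) (1 - a)) :
    ∫ y in a..b, (1 - y) ^ r = ((1 - a) ^ (r + 1) - (1 - b) ^ (r + 1)) / (r + 1) := by
  rw [integral_comp_sub_left (fun y => y ^ r), integral_rpow h]

lemma intervalIntegrable_one_sub_rpow {r : ℝ} (hr : -1 < r) (a b : ℝ) :
    IntervalIntegrable (fun y : ℝ => (1 - y) ^ r) volume a b := by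
  simpa using (intervalIntegrable_rpow' hr (a := 1 - a) (b := 1 - b)).comp_sub_left 1

section Kernel

variable {s m x : ℝ}

lemma intervalIntegrable_kernel (hs : s < 1) (hm : 0 ≤ m) (hx0 : 0 ≤ x) (hx1 : x < 1) :
    IntervalIntegrable (fun y => (1 - y) ^ (-s) / (1 - x * y) ^ m) volume 0 1 := by
  have hdom := (intervalIntegrable_one_sub_rpow (r := -s) (by linarith) 0 1).div_const ((1 - x) ^ m)
  refine hdom.mono_fun' (by fun_prop : Measurable _).aestronglyMeasurable ?_
  filter_upwards [ae_restrict_mem measurableSet_uIoc] with y hy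
  rw [uIoc_of_le zero_le_one] at hy
  have hy1 : 0 ≤ 1 - y := sub_nonneg.2 hy.2
  have hxy : 1 - x ≤ 1 - x * y := by nlinarith [hy.2]
  have hx : 0 < 1 - x := sub_pos.2 hx1
  rw [Real.norm_of_nonneg (div_nonneg (Real.rpow_nonneg hy1 _)
    (Real.rpow_nonneg (hx.le.trans hxy) _))]
  exact div_le_div_of_nonneg_left (Real.rpow_nonneg hy1 _) (Real.rpow_pos_of_pos hx _)
    (Real.rpow_le_rpow hx.le hxy hm)

lemma integral_kernel_below_le (hms : 1 < m + s) (hm : 0 ≤ m) (hx0 : 0 ≤ x) (hx1 : x < 1) :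
    ∫ y in 0..x, (1 - y) ^ (-s) / (1 - x * y) ^ m ≤ (1 - x) ^ (1 - s - m) / (s + m - 1) := by
  have hx : 0 < 1 - x := sub_pos.2 hx1
  have h0 : (0 : ℝ) ∉ uIcc (1 - x) (1 - 0) := by
    rw [uIcc_of_le (by linarith)]
    exact fun h => hx.not_ge h.1
  have hint : IntervalIntegrable (fun y : ℝ => (1 - y) ^ (-(s + m))) volume 0 x := by
    simpa using ((intervalIntegrable_rpow (r := -(s + m)) (Or.inr h0)).comp_sub_left 1).symm
  calc ∫ y in 0..x, (1 - y) ^ (-s) / (1 - x * y) ^ m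
      ≤ ∫ y in 0..x, (1 - y) ^ (-(s + m)) := by
        refine integral_mono_on_of_nonneg hx0 hint (fun y hy => ?_) (fun y hy => ?_)
        all_goals
          have h1y : 0 < 1 - y := by linarith [hy.2]
          have hxy : 1 - y ≤ 1 - x * y := by nlinarith [hy.1]
        · exact div_nonneg (Real.rpow_nonneg h1y.le _) (Real.rpow_nonneg (h1y.le.trans hxy) _)
        · calc (1 - y) ^ (-s) / (1 - x * y) ^ m ≤ (1 - y) ^ (-s) / (1 - y) ^ m :=
                div_le_div_of_nonneg_left (Real.rpow_nonneg h1y.le _) (Real.rpow_pos_of_pos h1y _)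
                  (Real.rpow_le_rpow h1y.le hxy hm)
            _ = (1 - y) ^ (-(s + m)) := by
                rw [neg_add, Real.rpow_add h1y, Real.rpow_neg h1y.le m, div_eq_mul_inv]
    _ = ((1 - x) ^ (1 - s - m) - 1) / (s + m - 1) := by
        have h1 : s + m - 1 ≠ 0 := by linarith
        have h2 : 1 - s - m ≠ 0 := by linarith
        rw [integral_one_sub_rpow (Or.inr ⟨by linarith, h0⟩), sub_zero, Real.one_rpow,
          show -(s + m) + 1 = 1 - s - m by ring]
        field_simp
        ring
    _ ≤ (1 - x) ^ (1 - s - m) / (s + m - 1) := by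
        gcongr
        · linarith
        · linarith

lemma integral_kernel_above_le (hs : s < 1) (hm : 0 ≤ m) (hx0 : 0 ≤ x) (hx1 : x < 1) :
    ∫ y in x..1, (1 - y) ^ (-s) / (1 - x * y) ^ m ≤ (1 - x) ^ (1 - s - m) / (1 - s) := by
  have hx : 0 < 1 - x := sub_pos.2 hx1
  calc ∫ y in x..1, (1 - y) ^ (-s) / (1 - x * y) ^ m
      ≤ ∫ y in x..1, (1 - y) ^ (-s) / (1 - x) ^ m := by
        refine integral_mono_on_of_nonneg hx1.le
          ((intervalIntegrable_one_sub_rpow (r := -s) (by linarith) x 1).div_const _)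
          (fun y hy => ?_) (fun y hy => ?_)
        all_goals
          have h1y : 0 ≤ 1 - y := by linarith [hy.2]
          have hxy : 1 - x ≤ 1 - x * y := by nlinarith [mul_nonneg hx0 h1y]
        · exact div_nonneg (Real.rpow_nonneg h1y _) (Real.rpow_nonneg (hx.le.trans hxy) _)
        · exact div_le_div_of_nonneg_left (Real.rpow_nonneg h1y _) (Real.rpow_pos_of_pos hx _)
            (Real.rpow_le_rpow hx.le hxy hm)
    _ = (1 - x) ^ (1 - s - m) / (1 - s) := by
        rw [intervalIntegral.integral_div, integral_one_sub_rpow (Or.inl (by linarith)), sub_self,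
          Real.zero_rpow (by linarith), sub_zero, show 1 - s - m = -s + 1 - m by ring,
          Real.rpow_sub hx]
        ring

lemma integral_kernel_le (hs : s < 1) (hms : 1 < m + s) (hx0 : 0 ≤ x) (hx1 : x < 1) :
    ∫ y in 0..1, (1 - y) ^ (-s) / (1 - x * y) ^ m ≤
      (1 / (s + m - 1) + 1 / (1 - s)) * (1 - x) ^ (1 - s - m) := by
  have hm : 0 ≤ m := by linarith
  have hint := intervalIntegrable_kernel hs hm hx0 hx1
  have hx : x ∈ uIcc (0 : ℝ) 1 := by rw [uIcc_of_le zero_le_one]; exact ⟨hx0, hx1.le⟩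
  rw [← integral_add_adjacent_intervals (hint.mono_set (uIcc_subset_uIcc left_mem_uIcc hx))
    (hint.mono_set (uIcc_subset_uIcc hx right_mem_uIcc))]
  calc _ ≤ (1 - x) ^ (1 - s - m) / (s + m - 1) + (1 - x) ^ (1 - s - m) / (1 - s) :=
        add_le_add (integral_kernel_below_le hms hm hx0 hx1)
          (integral_kernel_above_le hs hm hx0 hx1)
    _ = _ := by ring

lemma rpow_mul_kernel_le {k y : ℝ} (hm : 0 ≤ m) (hx1 : x ≤ 1) (hy0 : 0 ≤ y)
    (hy1 : y ≤ 1) :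
    (1 - y) ^ (-s) * y ^ k / (1 - x * y) ^ m ≤
      max 1 ((1 / 2 : ℝ) ^ (-s)) / (1 / 2) ^ m * y ^ k +
        max 1 ((1 / 2 : ℝ) ^ k) * ((1 - y) ^ (-s) / (1 - x * y) ^ m) := by
  have hxy : 1 - y ≤ 1 - x * y := by nlinarith [mul_le_mul_of_nonneg_right hx1 hy0]
  have h1y : 0 ≤ 1 - y := sub_nonneg.2 hy1
  rw [mul_div_right_comm]
  refine mul_le_add_mul_of_le_or_le
    (div_nonneg (Real.rpow_nonneg h1y _) (Real.rpow_nonneg (h1y.trans hxy) _))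
    (Real.rpow_nonneg hy0 _) (by positivity) (by positivity) ?_
  rcases le_total y (1 / 2) with hy | hy
  · left
    exact div_le_div₀ (by positivity)
      (Real.rpow_le_max_one_rpow _ (by norm_num) (by linarith) (by linarith)) (by positivity)
      (Real.rpow_le_rpow (by norm_num) (by nlinarith) hm)
  · exact .inr (Real.rpow_le_max_one_rpow _ (by norm_num) hy hy1)

end Kernel

theorem stmt15 (s m k : ℝ) (hs : s < 1) (hms : 1 < m + s) (hk : -1 < k) :
    ∃ C : ℝ, ∀ x : ℝ, 0 ≤ x → x < 1 →
      ∫ y in (0:ℝ)..1, (1 - y) ^ (-s) * y ^ k / (1 - x * y) ^ m ≤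
        C * (1 - x) ^ (1 - s - m) := by
  have hm : 0 ≤ m := by linarith
  set A : ℝ := max 1 ((1 / 2 : ℝ) ^ (-s)) / (1 / 2) ^ m
  set B : ℝ := max 1 ((1 / 2 : ℝ) ^ k)
  refine ⟨A / (k + 1) + B * (1 / (s + m - 1) + 1 / (1 - s)), fun x hx0 hx1 => ?_⟩
  have hR : 1 ≤ (1 - x) ^ (1 - s - m) :=
    Real.one_le_rpow_of_pos_of_le_one_of_nonpos (by linarith) (by linarith) (by linarith)
  have hpow : IntervalIntegrable (fun y : ℝ => y ^ k) volume 0 1 := intervalIntegrable_rpow' hk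
  have hker := intervalIntegrable_kernel hs hm hx0 hx1
  calc ∫ y in (0:ℝ)..1, (1 - y) ^ (-s) * y ^ k / (1 - x * y) ^ m
      ≤ ∫ y in (0:ℝ)..1, A * y ^ k + B * ((1 - y) ^ (-s) / (1 - x * y) ^ m) :=
        integral_mono_on_of_nonneg zero_le_one ((hpow.const_mul A).add (hker.const_mul B))
          (fun y hy => div_nonneg (mul_nonneg (Real.rpow_nonneg (by linarith [hy.2]) _)
            (Real.rpow_nonneg hy.1 _)) (Real.rpow_nonneg (by nlinarith [hy.1, hy.2]) _))
          (fun y hy => rpow_mul_kernel_le hm hx1.le hy.1 hy.2)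
    _ = A / (k + 1) + B * ∫ y in (0:ℝ)..1, (1 - y) ^ (-s) / (1 - x * y) ^ m := by
        rw [integral_add (hpow.const_mul A) (hker.const_mul B), intervalIntegral.integral_const_mul,
          intervalIntegral.integral_const_mul, integral_rpow (.inl hk), Real.one_rpow,
          Real.zero_rpow (by linarith)]
        ring
    _ ≤ A / (k + 1) * (1 - x) ^ (1 - s - m) +
          B * ((1 / (s + m - 1) + 1 / (1 - s)) * (1 - x) ^ (1 - s - m)) := by
        have hk1 : 0 < k + 1 := by linarith
        exact add_le_add (le_mul_of_one_le_right (div_nonneg (by positivity) hk1.le) hR)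
          (mul_le_mul_of_nonneg_left (integral_kernel_le hs hms hx0 hx1) (by positivity))
    _ = _ := by ring
end

section
/- Suppose 1 < p < ∞, j > −1, k > −1, m > 0, u < 1, and u > 1 − m p, and set w = u + (m − 1)p. Then there exists a finite constant C, depending only on p, m, k, j, and u, with the following property: for every measurable f : (0,1) → ℂ, if g(x) = ∫₀¹ |f(y)| y^k / (1 − x y)^m dy for x ∈ (0,1) (allowing the value ∞), then (∫₀¹ g(x)^p x^j (1 − x)^{−u} dx)^{1/p} ≤ C (∫₀¹ |f(y)|^p y^k (1 − y)^{−w} dy)^{1/p}. -/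
/-!
Schur's test. On `(0,1)` put `μ = x^j (1-x)^(-u) dx` and `ν = y^k (1-y)^(-w) dy`; the operator
is integration against `K(x,y) = (1-y)^w (1-xy)^(-m)` with respect to `ν`. Everything rests on
`∫₀¹ y^α (1-y)^β (1-xy)^(-m) dy ≲ (1-x)^(β+1-m)` for `α > -1`, `-1 < β < m-1`, which follows from
`1 - xy ≥ ((1-x) + (1-y))/2` and `∫₀^∞ t^β (a+t)^(-m) dt ≲ a^(β+1-m)`. With the test functions
`φ(y)^q = (1-y)^(m-1-r)` and `ψ(x)^q = (1-x)^(-r)` both Schur conditions are instances of this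
estimate once `0 < r < m` and `1 - m - u < r(p-1) < 1 - u`, and such an `r` exists exactly
because `1 - mp < u < 1`.
-/

open MeasureTheory Set ENNReal

theorem rpow_le_two_rpow_abs {t c : ℝ} (ht : 1 / 2 ≤ t) (ht₁ : t ≤ 1) : t ^ c ≤ 2 ^ |c| := by
  rcases le_or_gt 0 c with hc | hc
  · exact (Real.rpow_le_one (by linarith) ht₁ hc).trans
      (Real.one_le_rpow (by norm_num) (abs_nonneg c))
  · calc t ^ c ≤ (2⁻¹ : ℝ) ^ c := Real.rpow_le_rpow_of_nonpos (by norm_num) (by linarith) hc.le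
      _ = 2 ^ |c| := by
        rw [abs_of_neg hc, Real.inv_rpow (by norm_num), Real.rpow_neg (by norm_num)]

theorem lintegral_Ioc_rpow {a β : ℝ} (ha : 0 ≤ a) (hβ : -1 < β) :
    ∫⁻ t in Ioc 0 a, ENNReal.ofReal (t ^ β) = ENNReal.ofReal (a ^ (β + 1) / (β + 1)) := by
  have hint : IntegrableOn (fun t : ℝ => t ^ β) (Ioc 0 a) :=
    (intervalIntegrable_iff_integrableOn_Ioc_of_le ha).1
      (intervalIntegral.intervalIntegrable_rpow' hβ)
  rw [← ofReal_integral_eq_lintegral_ofReal hint, ← intervalIntegral.integral_of_le ha,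
    integral_rpow (Or.inl hβ), Real.zero_rpow (by linarith), sub_zero]
  filter_upwards [ae_restrict_mem measurableSet_Ioc] with t ht
  exact Real.rpow_nonneg ht.1.le _

theorem lintegral_Ioi_rpow {a γ : ℝ} (ha : 0 < a) (hγ : γ < -1) :
    ∫⁻ t in Ioi a, ENNReal.ofReal (t ^ γ) = ENNReal.ofReal (-a ^ (γ + 1) / (γ + 1)) := by
  rw [← ofReal_integral_eq_lintegral_ofReal (integrableOn_Ioi_rpow_of_lt hγ ha),
    integral_Ioi_rpow_of_lt hγ ha]
  filter_upwards [ae_restrict_mem measurableSet_Ioi] with t ht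
  exact Real.rpow_nonneg (ha.trans ht).le _

theorem lintegral_Ioi_rpow_mul_add_rpow_neg_le {a β m : ℝ} (ha : 0 < a) (hβ : -1 < β)
    (hβm : β + 1 < m) :
    ∫⁻ t in Ioi 0, ENNReal.ofReal (t ^ β * (a + t) ^ (-m)) ≤
      ENNReal.ofReal ((1 / (β + 1) + 1 / (m - β - 1)) * a ^ (β + 1 - m)) := by
  have hnear : ∀ t ∈ Ioc 0 a, ENNReal.ofReal (t ^ β * (a + t) ^ (-m)) ≤
      ENNReal.ofReal (a ^ (-m)) * ENNReal.ofReal (t ^ β) := fun t ht => by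
    rw [← ENNReal.ofReal_mul (Real.rpow_nonneg ha.le _), mul_comm]
    exact ENNReal.ofReal_le_ofReal (mul_le_mul_of_nonneg_right
      (Real.rpow_le_rpow_of_nonpos ha (by linarith [ht.1]) (by linarith))
      (Real.rpow_nonneg ht.1.le _))
  have hfar : ∀ t ∈ Ioi a, ENNReal.ofReal (t ^ β * (a + t) ^ (-m)) ≤
      ENNReal.ofReal (t ^ (β - m)) := fun t (ht : a < t) => by
    have ht₀ : 0 < t := ha.trans ht
    rw [sub_eq_add_neg, Real.rpow_add ht₀]
    exact ENNReal.ofReal_le_ofReal (mul_le_mul_of_nonneg_left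
      (Real.rpow_le_rpow_of_nonpos ht₀ (by linarith) (by linarith)) (Real.rpow_nonneg ht₀.le _))
  calc ∫⁻ t in Ioi 0, ENNReal.ofReal (t ^ β * (a + t) ^ (-m))
      ≤ (∫⁻ t in Ioc 0 a, ENNReal.ofReal (t ^ β * (a + t) ^ (-m))) +
          ∫⁻ t in Ioi a, ENNReal.ofReal (t ^ β * (a + t) ^ (-m)) := by
        rw [← Ioc_union_Ioi_eq_Ioi ha.le]
        exact lintegral_union_le _ _ _
    _ ≤ (∫⁻ t in Ioc 0 a, ENNReal.ofReal (a ^ (-m)) * ENNReal.ofReal (t ^ β)) +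
          ∫⁻ t in Ioi a, ENNReal.ofReal (t ^ (β - m)) := by
        exact add_le_add (setLIntegral_mono (by fun_prop) hnear)
          (setLIntegral_mono (by fun_prop) hfar)
    _ = ENNReal.ofReal (a ^ (-m)) * ENNReal.ofReal (a ^ (β + 1) / (β + 1)) +
          ENNReal.ofReal (-a ^ (β - m + 1) / (β - m + 1)) := by
        rw [lintegral_const_mul _ (by fun_prop), lintegral_Ioc_rpow ha.le hβ,
          lintegral_Ioi_rpow ha (by linarith)]
    _ = ENNReal.ofReal ((1 / (β + 1) + 1 / (m - β - 1)) * a ^ (β + 1 - m)) := by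
        rw [← ENNReal.ofReal_mul (Real.rpow_nonneg ha.le _),
          ← ENNReal.ofReal_add (mul_nonneg (Real.rpow_nonneg ha.le _)
            (div_nonneg (Real.rpow_nonneg ha.le _) (by linarith)))
            (div_nonneg_of_nonpos (neg_nonpos.2 (Real.rpow_nonneg ha.le _)) (by linarith))]
        congr 1
        have hpow : a ^ (-m) * a ^ (β + 1) = a ^ (β + 1 - m) := by
          rw [← Real.rpow_add ha]; ring_nf
        have h₁ : β + 1 ≠ 0 := by linarith
        have h₂ : m - β - 1 ≠ 0 := by linarith
        rw [mul_div_assoc', hpow, show β - m + 1 = -(m - β - 1) by ring,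
          show β + 1 - m = -(m - β - 1) by ring]
        field_simp

theorem setLIntegral_Ioo_comp_one_sub (f : ℝ → ℝ≥0∞) :
    ∫⁻ y in Ioo 0 1, f (1 - y) = ∫⁻ t in Ioo 0 1, f t := by
  have := (Measure.measurePreserving_sub_left volume (1 : ℝ)).setLIntegral_comp_preimage_emb
    (Homeomorph.subLeft (1 : ℝ)).measurableEmbedding f (Ioo 0 1)
  simpa [preimage_const_sub_Ioo] using this

/-- `y^α` and `(1-y)^β` are each bounded on the half of `(0,1)` where the other one may be
singular. -/
theorem rpow_mul_rpow_mul_one_sub_mul_rpow_neg_le {α β m x y : ℝ} (hm : 0 < m)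
    (hx : x ∈ Ioo (0 : ℝ) 1) (hy : y ∈ Ioo (0 : ℝ) 1) :
    y ^ α * (1 - y) ^ β * (1 - x * y) ^ (-m) ≤
      2 ^ (m + |α| + |β|) * (y ^ α + (1 - y) ^ β * ((1 - x) + (1 - y)) ^ (-m)) := by
  obtain ⟨hx₀, hx₁⟩ := hx
  obtain ⟨hy₀, hy₁⟩ := hy
  have hxy : 0 < 1 - x * y := by nlinarith
  have h2 : (2 : ℝ) ^ (m + |α| + |β|) = 2 ^ m * 2 ^ |α| * 2 ^ |β| := by
    rw [Real.rpow_add (by norm_num), Real.rpow_add (by norm_num)]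
  have h2α : 1 ≤ (2 : ℝ) ^ |α| := Real.one_le_rpow (by norm_num) (abs_nonneg α)
  have h2β : 1 ≤ (2 : ℝ) ^ |β| := Real.one_le_rpow (by norm_num) (abs_nonneg β)
  have hyα := Real.rpow_nonneg hy₀.le α
  have hyβ := Real.rpow_nonneg (sub_nonneg.2 hy₁.le) β
  have hsum := Real.rpow_nonneg (by linarith : 0 ≤ (1 - x) + (1 - y)) (-m)
  rcases le_or_gt y (1 / 2) with hy2 | hy2
  · have hkernel : (1 - x * y) ^ (-m) ≤ 2 ^ m := by
      have := rpow_le_two_rpow_abs (t := 1 - x * y) (c := -m) (by nlinarith) (by nlinarith)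
      rwa [abs_neg, abs_of_pos hm] at this
    have hβ : (1 - y) ^ β ≤ 2 ^ |β| := rpow_le_two_rpow_abs (by linarith) (by linarith)
    calc y ^ α * (1 - y) ^ β * (1 - x * y) ^ (-m) ≤ y ^ α * 2 ^ |β| * 2 ^ m := by gcongr
      _ = 2 ^ m * 1 * 2 ^ |β| * y ^ α := by ring
      _ ≤ 2 ^ (m + |α| + |β|) * y ^ α := by rw [h2]; gcongr
      _ ≤ _ := by gcongr; exact le_add_of_nonneg_right (mul_nonneg hyβ hsum)
  · have hkernel : (1 - x * y) ^ (-m) ≤ 2 ^ m * ((1 - x) + (1 - y)) ^ (-m) := by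
      calc (1 - x * y) ^ (-m) ≤ (2⁻¹ * ((1 - x) + (1 - y))) ^ (-m) :=
            Real.rpow_le_rpow_of_nonpos (by linarith) (by nlinarith) (by linarith)
        _ = 2 ^ m * ((1 - x) + (1 - y)) ^ (-m) := by
            rw [Real.mul_rpow (by norm_num) (by linarith), Real.inv_rpow (by norm_num),
              Real.rpow_neg (by norm_num), inv_inv]
    have hα : y ^ α ≤ 2 ^ |α| := rpow_le_two_rpow_abs hy2.le hy₁.le
    calc y ^ α * (1 - y) ^ β * (1 - x * y) ^ (-m)
        ≤ 2 ^ |α| * (1 - y) ^ β * (2 ^ m * ((1 - x) + (1 - y)) ^ (-m)) := by gcongr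
      _ = 2 ^ m * 2 ^ |α| * 1 * ((1 - y) ^ β * ((1 - x) + (1 - y)) ^ (-m)) := by ring
      _ ≤ 2 ^ (m + |α| + |β|) * ((1 - y) ^ β * ((1 - x) + (1 - y)) ^ (-m)) := by
          rw [h2]; gcongr
      _ ≤ _ := by gcongr; exact le_add_of_nonneg_left hyα

theorem exists_lintegral_rpow_mul_one_sub_mul_rpow_neg_le {α β m : ℝ} (hα : -1 < α)
    (hβ : -1 < β) (hβm : β + 1 < m) :
    ∃ C : ℝ≥0∞, C ≠ ∞ ∧ ∀ x ∈ Ioo (0 : ℝ) 1,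
      ∫⁻ y in Ioo 0 1, ENNReal.ofReal (y ^ α * (1 - y) ^ β * (1 - x * y) ^ (-m)) ≤
        C * ENNReal.ofReal ((1 - x) ^ (β + 1 - m)) := by
  set c : ℝ := 2 ^ (m + |α| + |β|)
  set D : ℝ := 1 / (β + 1) + 1 / (m - β - 1)
  have hc : 0 ≤ c := by positivity
  have hD : 0 ≤ D := add_nonneg (one_div_nonneg.2 (by linarith)) (one_div_nonneg.2 (by linarith))
  refine ⟨ENNReal.ofReal (c * (1 / (α + 1) + D)), ofReal_ne_top, fun x hx => ?_⟩
  have ha : 0 < 1 - x := sub_pos.2 hx.2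
  have hpow : 1 ≤ (1 - x) ^ (β + 1 - m) :=
    Real.one_le_rpow_of_pos_of_le_one_of_nonpos ha (by linarith [hx.1]) (by linarith)
  have hfirst : ∫⁻ y in Ioo 0 1, ENNReal.ofReal (y ^ α) ≤ ENNReal.ofReal (1 / (α + 1)) := by
    calc ∫⁻ y in Ioo 0 1, ENNReal.ofReal (y ^ α) ≤ ∫⁻ y in Ioc 0 1, ENNReal.ofReal (y ^ α) :=
          lintegral_mono_set Ioo_subset_Ioc_self
      _ = _ := by rw [lintegral_Ioc_rpow zero_le_one hα, Real.one_rpow]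
  have hsecond : ∫⁻ y in Ioo 0 1, ENNReal.ofReal ((1 - y) ^ β * ((1 - x) + (1 - y)) ^ (-m)) ≤
      ENNReal.ofReal (D * (1 - x) ^ (β + 1 - m)) := by
    rw [setLIntegral_Ioo_comp_one_sub fun t => ENNReal.ofReal (t ^ β * ((1 - x) + t) ^ (-m))]
    exact (lintegral_mono_set Ioo_subset_Ioi_self).trans
      (lintegral_Ioi_rpow_mul_add_rpow_neg_le ha hβ hβm)
  calc ∫⁻ y in Ioo 0 1, ENNReal.ofReal (y ^ α * (1 - y) ^ β * (1 - x * y) ^ (-m))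
      ≤ ∫⁻ y in Ioo 0 1, ENNReal.ofReal c * (ENNReal.ofReal (y ^ α) +
          ENNReal.ofReal ((1 - y) ^ β * ((1 - x) + (1 - y)) ^ (-m))) := by
        refine setLIntegral_mono (by fun_prop) fun y hy => ?_
        rw [← ENNReal.ofReal_add (Real.rpow_nonneg hy.1.le _) (mul_nonneg
          (Real.rpow_nonneg (by linarith [hy.2]) _) (Real.rpow_nonneg (by linarith [hy.2]) _)),
          ← ENNReal.ofReal_mul hc]
        exact ENNReal.ofReal_le_ofReal
          (rpow_mul_rpow_mul_one_sub_mul_rpow_neg_le (by linarith) hx hy)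
    _ = ENNReal.ofReal c * ((∫⁻ y in Ioo 0 1, ENNReal.ofReal (y ^ α)) +
          ∫⁻ y in Ioo 0 1, ENNReal.ofReal ((1 - y) ^ β * ((1 - x) + (1 - y)) ^ (-m))) := by
        rw [lintegral_const_mul _ (by fun_prop), lintegral_add_left (by fun_prop)]
    _ ≤ ENNReal.ofReal c * (ENNReal.ofReal (1 / (α + 1)) +
          ENNReal.ofReal (D * (1 - x) ^ (β + 1 - m))) := by gcongr
    _ ≤ ENNReal.ofReal (c * (1 / (α + 1) + D)) * ENNReal.ofReal ((1 - x) ^ (β + 1 - m)) := by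
        have hα₁ : 0 ≤ 1 / (α + 1) := one_div_nonneg.2 (by linarith)
        rw [← ENNReal.ofReal_add hα₁ (by positivity), ← ENNReal.ofReal_mul hc,
          ← ENNReal.ofReal_mul (by positivity), mul_assoc]
        gcongr
        nlinarith [mul_le_mul_of_nonneg_left hpow hα₁]

theorem lintegral_mul_rpow_le_of_holderConjugate {β : Type*} [MeasurableSpace β] {ν : Measure β}
    {p q : ℝ} (hpq : p.HolderConjugate q) {k φ F : β → ℝ≥0∞} (hk : Measurable k)
    (hφ : Measurable φ) (hF : Measurable F) (hφ₀ : ∀ᵐ y ∂ν, φ y ≠ 0) (hφ_top : ∀ᵐ y ∂ν, φ y ≠ ∞) :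
    (∫⁻ y, k y * F y ∂ν) ^ p ≤
      (∫⁻ y, k y * φ y ^ q ∂ν) ^ (p / q) * ∫⁻ y, k y * (F y ^ p / φ y ^ p) ∂ν := by
  have hp := hpq.pos
  have hq := hpq.symm.pos
  have hsplit : (fun y => k y * F y) =ᵐ[ν]
      (fun y => k y ^ (1 / p) * (F y / φ y)) * fun y => k y ^ (1 / q) * φ y := by
    filter_upwards [hφ₀, hφ_top] with y h₀ h_top
    calc k y * F y = k y ^ (1 / p + 1 / q) * (F y / φ y * φ y) := by
          rw [hpq.one_div_add_one_div, div_one, ENNReal.rpow_one, ENNReal.div_mul_cancel h₀ h_top]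
      _ = _ := by
          rw [ENNReal.rpow_add_of_nonneg _ _ (by positivity) (by positivity), Pi.mul_apply]
          ring
  have holder := ENNReal.lintegral_mul_le_Lp_mul_Lq ν hpq
    (f := fun y => k y ^ (1 / p) * (F y / φ y)) (g := fun y => k y ^ (1 / q) * φ y)
    (by fun_prop) (by fun_prop)
  rw [← lintegral_congr_ae hsplit] at holder
  have hpow (r : ℝ) (a b : ℝ≥0∞) (hr : 0 < r) : (a ^ (1 / r) * b) ^ r = a * b ^ r := by
    rw [ENNReal.mul_rpow_of_nonneg _ _ hr.le, ← ENNReal.rpow_mul, one_div_mul_cancel hr.ne',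
      ENNReal.rpow_one]
  simp only [hpow _ _ _ hp, hpow _ _ _ hq, ENNReal.div_rpow_of_nonneg _ _ hp.le] at holder
  calc (∫⁻ y, k y * F y ∂ν) ^ p
      ≤ ((∫⁻ y, k y * (F y ^ p / φ y ^ p) ∂ν) ^ (1 / p) * (∫⁻ y, k y * φ y ^ q ∂ν) ^ (1 / q)) ^ p :=
        ENNReal.rpow_le_rpow holder hp.le
    _ = _ := by
        rw [ENNReal.mul_rpow_of_nonneg _ _ hp.le, ← ENNReal.rpow_mul, ← ENNReal.rpow_mul,
          one_div_mul_cancel hp.ne', ENNReal.rpow_one, one_div_mul_eq_div, mul_comm]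

theorem lintegral_rpow_lintegral_mul_le_of_schur {α β : Type*} [MeasurableSpace α]
    [MeasurableSpace β] {μ : Measure α} {ν : Measure β} [SFinite μ] [SFinite ν] {p q : ℝ}
    (hpq : p.HolderConjugate q) {K : α → β → ℝ≥0∞} (hK : Measurable (Function.uncurry K))
    {φ : β → ℝ≥0∞} {ψ : α → ℝ≥0∞} (hφ : Measurable φ) (hψ : Measurable ψ)
    (hφ₀ : ∀ᵐ y ∂ν, φ y ≠ 0) (hφ_top : ∀ᵐ y ∂ν, φ y ≠ ∞) {A B : ℝ≥0∞}
    (hA : ∀ᵐ x ∂μ, ∫⁻ y, K x y * φ y ^ q ∂ν ≤ A * ψ x ^ q)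
    (hB : ∀ᵐ y ∂ν, ∫⁻ x, K x y * ψ x ^ p ∂μ ≤ B * φ y ^ p) {F : β → ℝ≥0∞} (hF : Measurable F) :
    ∫⁻ x, (∫⁻ y, K x y * F y ∂ν) ^ p ∂μ ≤ A ^ (p / q) * B * ∫⁻ y, F y ^ p ∂ν := by
  have hp := hpq.pos
  have hq := hpq.symm.pos
  set G : β → ℝ≥0∞ := fun y => F y ^ p / φ y ^ p
  have hKx : ∀ x, Measurable (K x) := fun x => hK.comp measurable_prodMk_left
  have hpointwise : ∀ᵐ x ∂μ, (∫⁻ y, K x y * F y ∂ν) ^ p ≤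
      A ^ (p / q) * ∫⁻ y, ψ x ^ p * (K x y * G y) ∂ν := by
    filter_upwards [hA] with x hx
    calc (∫⁻ y, K x y * F y ∂ν) ^ p
        ≤ (A * ψ x ^ q) ^ (p / q) * ∫⁻ y, K x y * G y ∂ν :=
          (lintegral_mul_rpow_le_of_holderConjugate hpq (hKx x) hφ hF hφ₀ hφ_top).trans
            (by gcongr)
      _ = A ^ (p / q) * ∫⁻ y, ψ x ^ p * (K x y * G y) ∂ν := by
          rw [lintegral_const_mul _ (by fun_prop), ENNReal.mul_rpow_of_nonneg _ _ (by positivity),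
            ← ENNReal.rpow_mul, mul_div_cancel₀ _ hq.ne', mul_assoc]
  calc ∫⁻ x, (∫⁻ y, K x y * F y ∂ν) ^ p ∂μ
      ≤ ∫⁻ x, A ^ (p / q) * ∫⁻ y, ψ x ^ p * (K x y * G y) ∂ν ∂μ := lintegral_mono_ae hpointwise
    _ = A ^ (p / q) * ∫⁻ y, (∫⁻ x, K x y * ψ x ^ p ∂μ) * G y ∂ν := by
        have hK' : Measurable fun z : α × β => K z.1 z.2 := hK
        have hmeas : Measurable (Function.uncurry fun x y => ψ x ^ p * (K x y * G y)) := by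
          unfold Function.uncurry; fun_prop
        rw [lintegral_const_mul _ hmeas.lintegral_prod_right,
          lintegral_lintegral_swap hmeas.aemeasurable]
        congr 1
        refine lintegral_congr fun y => ?_
        rw [← lintegral_mul_const _ (by fun_prop)]
        congr 1 with x
        ring
    _ ≤ A ^ (p / q) * ∫⁻ y, B * φ y ^ p * G y ∂ν := by
        gcongr 1
        exact lintegral_mono_ae (hB.mono fun y hy => by gcongr)
    _ = A ^ (p / q) * B * ∫⁻ y, F y ^ p ∂ν := by
        rw [mul_assoc, ← lintegral_const_mul B (by fun_prop)]
        congr 1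
        refine lintegral_congr_ae ?_
        filter_upwards [hφ₀, hφ_top] with y h₀ h_top
        rw [mul_assoc, ENNReal.mul_div_cancel (by simp [h₀, hp.le]) (by simp [h_top, hp.le])]

theorem exists_schur_exponent {p m u : ℝ} (hp : 1 < p) (hu₁ : u < 1) (hu₂ : 1 - m * p < u) :
    ∃ r, 0 < r ∧ r < m ∧ 1 - m - u < r * (p - 1) ∧ r * (p - 1) < 1 - u := by
  have hp₁ : 0 < p - 1 := sub_pos.2 hp
  have hm : 0 < m := by nlinarith
  have hlo_hi : max 0 ((1 - m - u) / (p - 1)) < min m ((1 - u) / (p - 1)) :=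
    max_lt (lt_min hm (div_pos (by linarith) hp₁))
      (lt_min ((div_lt_iff₀ hp₁).2 (by linarith)) (div_lt_div_of_pos_right (by linarith) hp₁))
  obtain ⟨r, hlo, hhi⟩ := exists_between hlo_hi
  rw [max_lt_iff, div_lt_iff₀ hp₁] at hlo
  rw [lt_min_iff, lt_div_iff₀ hp₁] at hhi
  exact ⟨r, hlo.1, hhi.1, hlo.2, hhi.2⟩

noncomputable def jacobiMeasure (a b : ℝ) : Measure ℝ :=
  (volume.restrict (Ioo 0 1)).withDensity fun x => ENNReal.ofReal (x ^ a * (1 - x) ^ b)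

instance (a b : ℝ) : SFinite (jacobiMeasure a b) := by
  unfold jacobiMeasure; infer_instance

theorem lintegral_jacobiMeasure (a b : ℝ) (g : ℝ → ℝ≥0∞) :
    ∫⁻ x, g x ∂jacobiMeasure a b = ∫⁻ x in Ioo 0 1, ENNReal.ofReal (x ^ a * (1 - x) ^ b) * g x :=
  lintegral_withDensity_eq_lintegral_mul_non_measurable _ (by fun_prop)
    (ae_of_all _ fun _ => ofReal_lt_top) g

theorem ae_jacobiMeasure_mem_Ioo (a b : ℝ) : ∀ᵐ x ∂jacobiMeasure a b, x ∈ Ioo (0 : ℝ) 1 :=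
  (withDensity_absolutelyContinuous _ _).ae_le (ae_restrict_mem measurableSet_Ioo)

theorem ofReal_rpow_rpow {t : ℝ} (ht : 0 < t) (a c : ℝ) :
    ENNReal.ofReal (t ^ a) ^ c = ENNReal.ofReal (t ^ (a * c)) := by
  rw [ENNReal.ofReal_rpow_of_pos (Real.rpow_pos_of_pos ht a), ← Real.rpow_mul ht.le]

theorem lintegral_jacobiMeasure_kernel_left (k w m a c x : ℝ) :
    ∫⁻ y, ENNReal.ofReal ((1 - y) ^ w * (1 - x * y) ^ (-m)) * ENNReal.ofReal ((1 - y) ^ a) ^ c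
        ∂jacobiMeasure k (-w) =
      ∫⁻ y in Ioo 0 1, ENNReal.ofReal (y ^ k * (1 - y) ^ (a * c) * (1 - x * y) ^ (-m)) := by
  rw [lintegral_jacobiMeasure]
  refine setLIntegral_congr_fun measurableSet_Ioo fun y hy => ?_
  have ht : 0 < 1 - y := sub_pos.2 hy.2
  rw [ofReal_rpow_rpow ht, ← ENNReal.ofReal_mul' (Real.rpow_nonneg ht.le _),
    ← ENNReal.ofReal_mul (mul_nonneg (Real.rpow_nonneg hy.1.le _) (Real.rpow_nonneg ht.le _))]
  congr 1
  rw [Real.rpow_neg ht.le]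
  field_simp

theorem lintegral_jacobiMeasure_kernel_right (j u w m a c : ℝ) {y : ℝ} (hy : y < 1) :
    ∫⁻ x, ENNReal.ofReal ((1 - y) ^ w * (1 - x * y) ^ (-m)) * ENNReal.ofReal ((1 - x) ^ a) ^ c
        ∂jacobiMeasure j (-u) =
      ENNReal.ofReal ((1 - y) ^ w) *
        ∫⁻ x in Ioo 0 1, ENNReal.ofReal (x ^ j * (1 - x) ^ (a * c - u) * (1 - y * x) ^ (-m)) := by
  rw [lintegral_jacobiMeasure, ← lintegral_const_mul _ (by fun_prop)]
  refine setLIntegral_congr_fun measurableSet_Ioo fun x hx => ?_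
  have ht : 0 < 1 - x := sub_pos.2 hx.2
  rw [ofReal_rpow_rpow ht, ← ENNReal.ofReal_mul' (Real.rpow_nonneg ht.le _),
    ← ENNReal.ofReal_mul (mul_nonneg (Real.rpow_nonneg hx.1.le _) (Real.rpow_nonneg ht.le _)),
    ← ENNReal.ofReal_mul (Real.rpow_nonneg (sub_nonneg.2 hy.le) _)]
  congr 1
  rw [sub_eq_add_neg (a * c), Real.rpow_add ht, mul_comm y x]
  ring

theorem lintegral_jacobiMeasure_kernel_mul (k w m : ℝ) {x : ℝ} (hx : x ∈ Ioo (0 : ℝ) 1)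
    {g : ℝ → ℝ} (hg : 0 ≤ g) :
    ∫⁻ y, ENNReal.ofReal ((1 - y) ^ w * (1 - x * y) ^ (-m)) * ENNReal.ofReal (g y)
        ∂jacobiMeasure k (-w) =
      ∫⁻ y in Ioo 0 1, ENNReal.ofReal (g y * y ^ k / (1 - x * y) ^ m) := by
  rw [lintegral_jacobiMeasure]
  refine setLIntegral_congr_fun measurableSet_Ioo fun y hy => ?_
  have ht : 0 < 1 - y := sub_pos.2 hy.2
  have hxy : 0 < 1 - x * y := by nlinarith [hx.1, hx.2, hy.1, hy.2]
  rw [← ENNReal.ofReal_mul' (hg y),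
    ← ENNReal.ofReal_mul (mul_nonneg (Real.rpow_nonneg hy.1.le _) (Real.rpow_nonneg ht.le _))]
  congr 1
  rw [Real.rpow_neg ht.le, Real.rpow_neg hxy.le]
  field_simp

theorem exists_lintegral_rpow_lintegral_kernel_le {p j k m u : ℝ} (hp : 1 < p) (hj : -1 < j)
    (hk : -1 < k) (hu₁ : u < 1) (hu₂ : 1 - m * p < u) :
    ∃ C : ℝ≥0∞, C ≠ ∞ ∧ ∀ F : ℝ → ℝ≥0∞, Measurable F →
      ∫⁻ x, (∫⁻ y, ENNReal.ofReal ((1 - y) ^ (u + (m - 1) * p) * (1 - x * y) ^ (-m)) * F y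
          ∂jacobiMeasure k (-(u + (m - 1) * p))) ^ p ∂jacobiMeasure j (-u) ≤
        C * ∫⁻ y, F y ^ p ∂jacobiMeasure k (-(u + (m - 1) * p)) := by
  set w := u + (m - 1) * p with hw
  set q := p.conjExponent
  have hpq : p.HolderConjugate q := .conjExponent hp
  have hq := hpq.symm.pos
  obtain ⟨r, hr₀, hrm, hr₁, hr₂⟩ := exists_schur_exponent hp hu₁ hu₂
  obtain ⟨A, hA_top, hA⟩ :=
    exists_lintegral_rpow_mul_one_sub_mul_rpow_neg_le (β := m - 1 - r) (m := m) hk (by linarith)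
      (by linarith)
  obtain ⟨B, hB_top, hB⟩ :=
    exists_lintegral_rpow_mul_one_sub_mul_rpow_neg_le (β := -u - r * (p - 1)) (m := m) hj
      (by linarith) (by linarith)
  refine ⟨A ^ (p / q) * B, by finiteness, fun F hF => ?_⟩
  refine lintegral_rpow_lintegral_mul_le_of_schur hpq (by fun_prop)
    (φ := fun y => ENNReal.ofReal ((1 - y) ^ ((m - 1 - r) / q)))
    (ψ := fun x => ENNReal.ofReal ((1 - x) ^ (-r / q))) (by fun_prop) (by fun_prop) ?_
    (ae_of_all _ fun _ => ofReal_ne_top) ?_ ?_ hF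
  · filter_upwards [ae_jacobiMeasure_mem_Ioo k (-w)] with y hy
    exact (ENNReal.ofReal_pos.2 (Real.rpow_pos_of_pos (sub_pos.2 hy.2) _)).ne'
  · filter_upwards [ae_jacobiMeasure_mem_Ioo j (-u)] with x hx
    rw [lintegral_jacobiMeasure_kernel_left, div_mul_cancel₀ _ hq.ne',
      ofReal_rpow_rpow (sub_pos.2 hx.2), div_mul_cancel₀ _ hq.ne']
    convert hA x hx using 4
    ring
  · filter_upwards [ae_jacobiMeasure_mem_Ioo k (-w)] with y hy
    have ht : 0 < 1 - y := sub_pos.2 hy.2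
    have hpq' : p / q = p - 1 := hpq.div_conj_eq_sub_one
    rw [lintegral_jacobiMeasure_kernel_right _ _ _ _ _ _ hy.2, ofReal_rpow_rpow ht,
      show -r / q * p - u = -u - r * (p - 1) by rw [← hpq']; ring]
    calc ENNReal.ofReal ((1 - y) ^ w) * ∫⁻ x in Ioo 0 1,
          ENNReal.ofReal (x ^ j * (1 - x) ^ (-u - r * (p - 1)) * (1 - y * x) ^ (-m))
        ≤ ENNReal.ofReal ((1 - y) ^ w) *
          (B * ENNReal.ofReal ((1 - y) ^ (-u - r * (p - 1) + 1 - m))) := by gcongr; exact hB y hy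
      _ = B * ENNReal.ofReal ((1 - y) ^ ((m - 1 - r) / q * p)) := by
        rw [mul_left_comm, ← ENNReal.ofReal_mul (Real.rpow_nonneg ht.le _), ← Real.rpow_add ht,
          show (m - 1 - r) / q * p = (m - 1 - r) * (p - 1) by rw [← hpq']; ring, hw]
        ring_nf

theorem stmt16_general (p j k m u : ℝ) (hp1 : 1 < p) (hj : -1 < j) (hk : -1 < k)
    (hu1 : u < 1) (hu2 : 1 - m * p < u) :
    ∃ C : ℝ≥0∞, C ≠ ⊤ ∧
      ∀ f : ℝ → ℂ, Measurable f →
        (∫⁻ x in Ioo (0:ℝ) 1,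
            (∫⁻ y in Ioo (0:ℝ) 1,
                ENNReal.ofReal (‖f y‖ * y ^ k / (1 - x * y) ^ m)) ^ p *
              ENNReal.ofReal (x ^ j * (1 - x) ^ (-u))) ^ (1 / p) ≤
          C * (∫⁻ y in Ioo (0:ℝ) 1,
              ENNReal.ofReal (‖f y‖) ^ p *
                ENNReal.ofReal (y ^ k * (1 - y) ^ (-(u + (m - 1) * p)))) ^ (1 / p) := by
  obtain ⟨C, hC, hbound⟩ := exists_lintegral_rpow_lintegral_kernel_le hp1 hj hk hu1 hu2
  refine ⟨C ^ (1 / p), ENNReal.rpow_ne_top_of_nonneg (by positivity) hC, fun f hf => ?_⟩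
  have hlhs : ∫⁻ x in Ioo (0:ℝ) 1, (∫⁻ y in Ioo (0:ℝ) 1,
        ENNReal.ofReal (‖f y‖ * y ^ k / (1 - x * y) ^ m)) ^ p *
          ENNReal.ofReal (x ^ j * (1 - x) ^ (-u)) =
      ∫⁻ x, (∫⁻ y, ENNReal.ofReal ((1 - y) ^ (u + (m - 1) * p) * (1 - x * y) ^ (-m)) *
        ENNReal.ofReal ‖f y‖ ∂jacobiMeasure k (-(u + (m - 1) * p))) ^ p ∂jacobiMeasure j (-u) := by
    rw [lintegral_jacobiMeasure]
    refine setLIntegral_congr_fun measurableSet_Ioo fun x hx => ?_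
    rw [mul_comm, lintegral_jacobiMeasure_kernel_mul _ _ _ hx fun y => norm_nonneg (f y)]
  have hrhs : ∫⁻ y in Ioo (0:ℝ) 1, ENNReal.ofReal ‖f y‖ ^ p *
        ENNReal.ofReal (y ^ k * (1 - y) ^ (-(u + (m - 1) * p))) =
      ∫⁻ y, ENNReal.ofReal ‖f y‖ ^ p ∂jacobiMeasure k (-(u + (m - 1) * p)) := by
    simp only [lintegral_jacobiMeasure, mul_comm]
  rw [hlhs, hrhs, ← ENNReal.mul_rpow_of_nonneg _ _ (by positivity)]
  exact ENNReal.rpow_le_rpow (hbound _ (by fun_prop)) (by positivity)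

theorem stmt16 (p j k m u : ℝ) (hp1 : 1 < p) (hj : -1 < j) (hk : -1 < k)
    (hm : 0 < m) (hu1 : u < 1) (hu2 : 1 - m * p < u) :
    ∃ C : ℝ≥0∞, C ≠ ⊤ ∧
      ∀ f : ℝ → ℂ, Measurable f →
        (∫⁻ x in Ioo (0:ℝ) 1,
            (∫⁻ y in Ioo (0:ℝ) 1,
                ENNReal.ofReal (‖f y‖ * y ^ k / (1 - x * y) ^ m)) ^ p *
              ENNReal.ofReal (x ^ j * (1 - x) ^ (-u))) ^ (1 / p) ≤
          C * (∫⁻ y in Ioo (0:ℝ) 1,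
              ENNReal.ofReal (‖f y‖) ^ p *
                ENNReal.ofReal (y ^ k * (1 - y) ^ (-(u + (m - 1) * p)))) ^ (1 / p) :=
  stmt16_general p j k m u hp1 hj hk hu1 hu2
end

section
/- Let f : 𝔻 → ℂ be integrable with respect to area measure on 𝔻 and let n ≥ 0 be an integer. Then 𝒫f is analytic on 𝔻 and for every z ∈ 𝔻, its n-th complex derivative satisfies (𝒫f)^{(n)}(z) = ((n+1)!/π) ∫_𝔻 f(w) w̄ⁿ / (1 − w̄ z)^{2+n} dA(w). -/
/-!
For `|w| ≤ 1` the kernel `w̄ⁿ (1 - w̄ z)^{-(2+n)}` has `z`-derivative `(2+n) w̄ⁿ⁺¹ (1 - w̄ z)^{-(3+n)}`,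
and for `|z| ≤ r < 1` it is bounded by `(1 - r)^{-(2+n)}`. So differentiation under the integral
sign is dominated by a multiple of `|f|`, and the integrals normalised by `(n+1)!/π` form a chain
starting at `𝒫f` in which each is the derivative of the previous one on the disc. This gives the
formula for `(𝒫f)^{(n)}`, and its case `n = 0` gives complex differentiability, hence analyticity.
-/

open MeasureTheory Set

open ComplexConjugate Metric

theorem hasDerivAt_div_one_sub_mul_pow {a z : ℂ} (c : ℂ) (k : ℕ) (h : 1 - a * z ≠ 0) :
    HasDerivAt (fun z => c / (1 - a * z) ^ k) (k * (c * a / (1 - a * z) ^ (k + 1))) z := by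
  have hlin : HasDerivAt (fun z => 1 - a * z) (-a) z := by
    simpa using ((hasDerivAt_id z).const_mul a).const_sub 1
  refine ((hasDerivAt_const z c).fun_div (hlin.fun_pow k) (pow_ne_zero k h)).congr_deriv ?_
  rcases k with _ | m
  · simp
  · field_simp
    push_cast
    ring

theorem sub_le_norm_one_sub_conj_mul {w z : ℂ} {r : ℝ} (hw : ‖w‖ ≤ 1) (hz : ‖z‖ ≤ r) :
    1 - r ≤ ‖1 - conj w * z‖ :=
  calc 1 - r ≤ ‖(1 : ℂ)‖ - ‖conj w * z‖ := by
        rw [norm_one, norm_mul, Complex.norm_conj]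
        nlinarith [norm_nonneg w, norm_nonneg z]
    _ ≤ ‖1 - conj w * z‖ := norm_sub_norm_le _ _

noncomputable def bergmanIntegrand (f : ℂ → ℂ) (n : ℕ) (z w : ℂ) : ℂ :=
  f w * conj w ^ n / (1 - conj w * z) ^ (2 + n)

noncomputable def bergmanIntegral (μ : Measure ℂ) (f : ℂ → ℂ) (n : ℕ) (z : ℂ) : ℂ :=
  ∫ w, bergmanIntegrand f n z w ∂μ

section

variable {f : ℂ → ℂ} {n : ℕ} {z w : ℂ} {r : ℝ}

theorem norm_bergmanIntegrand_le (hw : ‖w‖ ≤ 1) (hz : ‖z‖ ≤ r) (hr : r < 1) :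
    ‖bergmanIntegrand f n z w‖ ≤ ‖f w‖ / (1 - r) ^ (2 + n) := by
  rw [bergmanIntegrand, norm_div, norm_mul, norm_pow, norm_pow, Complex.norm_conj]
  gcongr
  · exact mul_le_of_le_one_right (norm_nonneg _) (pow_le_one₀ (norm_nonneg _) hw)
  · exact sub_le_norm_one_sub_conj_mul hw hz

theorem hasDerivAt_bergmanIntegrand (hw : ‖w‖ ≤ 1) (hz : ‖z‖ < 1) :
    HasDerivAt (bergmanIntegrand f n · w) ((2 + n) * bergmanIntegrand f (n + 1) z w) z := by
  have hne : 1 - conj w * z ≠ 0 := by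
    rw [← norm_pos_iff]
    linarith [sub_le_norm_one_sub_conj_mul hw le_rfl (z := z)]
  refine (hasDerivAt_div_one_sub_mul_pow (f w * conj w ^ n) (2 + n) hne).congr_deriv ?_
  unfold bergmanIntegrand
  push_cast
  ring

theorem aestronglyMeasurable_bergmanIntegrand {μ : Measure ℂ} (hf : AEStronglyMeasurable f μ)
    (n : ℕ) (z : ℂ) : AEStronglyMeasurable (bergmanIntegrand f n z) μ :=
  (hf.mul (Complex.continuous_conj.pow n).aestronglyMeasurable).div₀
    ((continuous_const.sub (Complex.continuous_conj.mul continuous_const)).pow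
      _).aestronglyMeasurable

variable {μ : Measure ℂ}

theorem integrable_bergmanIntegrand (hμ : ∀ᵐ w ∂μ, ‖w‖ ≤ 1) (hf : Integrable f μ) (n : ℕ)
    (hz : ‖z‖ < 1) : Integrable (bergmanIntegrand f n z) μ :=
  (hf.norm.div_const _).mono' (aestronglyMeasurable_bergmanIntegrand hf.1 n z)
    (hμ.mono fun _ hw => norm_bergmanIntegrand_le hw le_rfl hz)

theorem hasDerivAt_bergmanIntegral (hμ : ∀ᵐ w ∂μ, ‖w‖ ≤ 1) (hf : Integrable f μ) (n : ℕ)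
    (hz : ‖z‖ < 1) :
    HasDerivAt (bergmanIntegral μ f n) ((2 + n) * bergmanIntegral μ f (n + 1) z) z := by
  set r := (1 + ‖z‖) / 2 with hr_def
  have hr : r < 1 := by linarith
  have hε : 0 < (1 - ‖z‖) / 2 := by linarith
  have hball : ∀ y ∈ ball z ((1 - ‖z‖) / 2), ‖y‖ ≤ r := fun y hy => by
    rw [mem_ball, dist_eq_norm] at hy
    linarith [norm_le_insert' y z]
  have hderiv := hasDerivAt_integral_of_dominated_loc_of_deriv_le (ball_mem_nhds z hε)
    (F' := fun y w => (2 + n) * bergmanIntegrand f (n + 1) y w)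
    (bound := fun w => ‖(2 + n : ℂ)‖ * (‖f w‖ / (1 - r) ^ (2 + (n + 1))))
    (.of_forall fun y => aestronglyMeasurable_bergmanIntegrand hf.1 n y)
    (integrable_bergmanIntegrand hμ hf n hz)
    ((aestronglyMeasurable_bergmanIntegrand hf.1 (n + 1) z).const_mul _)
    (hμ.mono fun w hw y hy => by
      rw [norm_mul]
      gcongr
      exact norm_bergmanIntegrand_le hw (hball y hy) hr)
    ((hf.norm.div_const _).const_mul _)
    (hμ.mono fun w hw y hy => hasDerivAt_bergmanIntegrand hw ((hball y hy).trans_lt hr))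
  rw [bergmanIntegral, ← integral_const_mul]
  exact hderiv.2

end

theorem iteratedDeriv_eqOn_of_hasDerivAt {𝕜 : Type*} [NontriviallyNormedField 𝕜]
    {F : ℕ → 𝕜 → 𝕜} {U : Set 𝕜} (hU : IsOpen U)
    (hF : ∀ n, ∀ z ∈ U, HasDerivAt (F n) (F (n + 1) z) z) (n : ℕ) :
    EqOn (iteratedDeriv n (F 0)) (F n) U := by
  induction n with
  | zero => intro z _; rfl
  | succ n ih =>
    intro z hz
    rw [iteratedDeriv_succ, (ih.eventuallyEq_of_mem (hU.mem_nhds hz)).deriv_eq]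
    exact (hF n z hz).deriv

theorem stmt17 (f : ℂ → ℂ)
    (hint : IntegrableOn f (Metric.ball (0 : ℂ) 1) volume) (n : ℕ) :
    AnalyticOnNhd ℂ (bergman f) (Metric.ball (0 : ℂ) 1) ∧
    ∀ z ∈ Metric.ball (0 : ℂ) 1,
      iteratedDeriv n (bergman f) z =
        ((Nat.factorial (n + 1) : ℂ) / (Real.pi : ℂ)) *
          ∫ w in Metric.ball (0 : ℂ) 1,
            f w * ((starRingEnd ℂ) w) ^ n / (1 - (starRingEnd ℂ) w * z) ^ (2 + n) := by
  have hμ : ∀ᵐ w ∂volume.restrict (ball (0 : ℂ) 1), ‖w‖ ≤ 1 :=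
    (ae_restrict_mem measurableSet_ball).mono fun w hw => (mem_ball_zero_iff.mp hw).le
  set F : ℕ → ℂ → ℂ := fun k z =>
    ((k + 1).factorial / Real.pi : ℂ) * bergmanIntegral (volume.restrict (ball 0 1)) f k z
  have hF : ∀ k, ∀ z ∈ ball (0 : ℂ) 1, HasDerivAt (F k) (F (k + 1) z) z := fun k z hz => by
    refine ((hasDerivAt_bergmanIntegral hμ hint k (mem_ball_zero_iff.mp hz)).const_mul
      _).congr_deriv ?_
    simp only [F, Nat.factorial_succ (k + 1)]
    push_cast
    ring
  have hF₀ : F 0 = bergman f := by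
    ext z
    simp [F, bergman, bergmanIntegral, bergmanIntegrand]
  rw [← hF₀]
  exact ⟨DifferentiableOn.analyticOnNhd
      (fun z hz => (hF 0 z hz).differentiableAt.differentiableWithinAt) isOpen_ball,
    iteratedDeriv_eqOn_of_hasDerivAt isOpen_ball hF n⟩
end

section
/- There exist a strictly increasing sequence of real numbers b₀ = 0 < b₁ < b₂ < … with bₙ < 1 for all n and bₙ → 1 as n → ∞, and a strictly increasing sequence of non-negative integers m₁ < m₂ < …, such that for every n ≥ 1, ∫_{b_{n−1}}^{b_n} (m_n + 1) r^{m_n + 1} dr ≥ 1/4. -/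
open MeasureTheory Set Filter

/-!
Take `b n = (1/2) ^ (1 / 4 ^ n)` for `n ≥ 1` and `m n = 4 ^ n - 2`. The integral equals
`(m + 1) / (m + 2) * (b_n ^ (m + 2) - b_{n-1} ^ (m + 2))`; with `m + 2 = 4 ^ n` the first power is
`1/2` and the second is `(1/2) ^ 4` (or `0` when `n = 1`), so the integral is at least
`3/4 * (1/2 - 1/16) > 1/4`.
-/

theorem integral_natCast_add_one_mul_pow (m : ℕ) (a b : ℝ) :
    ∫ r in a..b, ((m : ℝ) + 1) * r ^ (m + 1) =
      ((m : ℝ) + 1) / ((m : ℝ) + 2) * (b ^ (m + 2) - a ^ (m + 2)) := by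
  rw [intervalIntegral.integral_const_mul, integral_pow]
  push_cast
  ring

theorem quarter_le_integral_natCast_add_one_mul_pow {m : ℕ} {a b : ℝ} (hm : 2 ≤ m)
    (hb : b ^ (m + 2) = 1 / 2) (ha : a ^ (m + 2) ≤ 1 / 16) :
    (1 : ℝ) / 4 ≤ ∫ r in a..b, ((m : ℝ) + 1) * r ^ (m + 1) := by
  have hm' : (2 : ℝ) ≤ m := by exact_mod_cast hm
  have hratio : (3 : ℝ) / 4 ≤ ((m : ℝ) + 1) / ((m : ℝ) + 2) := by
    rw [le_div_iff₀ (by linarith)]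
    linarith
  rw [integral_natCast_add_one_mul_pow, hb]
  nlinarith

noncomputable def breakpoint (n : ℕ) : ℝ :=
  if n = 0 then 0 else (1 / 2 : ℝ) ^ (((4 ^ n : ℕ) : ℝ)⁻¹)

def blockExponent (n : ℕ) : ℕ := 4 ^ n - 2

theorem breakpoint_of_ne_zero {n : ℕ} (hn : n ≠ 0) :
    breakpoint n = (1 / 2 : ℝ) ^ (((4 ^ n : ℕ) : ℝ)⁻¹) :=
  if_neg hn

theorem breakpoint_pow_four_pow {n : ℕ} (hn : n ≠ 0) : breakpoint n ^ 4 ^ n = 1 / 2 := by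
  rw [breakpoint_of_ne_zero hn]
  exact Real.rpow_inv_natCast_pow (by norm_num) (by positivity)

theorem breakpoint_pred_pow_four_pow_le {n : ℕ} (hn : 1 ≤ n) :
    breakpoint (n - 1) ^ 4 ^ n ≤ 1 / 16 := by
  obtain ⟨k, rfl⟩ := Nat.exists_eq_add_of_le' hn
  rcases Nat.eq_zero_or_pos k with rfl | hk
  · simp [breakpoint]
  · rw [Nat.add_sub_cancel, pow_succ, pow_mul, breakpoint_pow_four_pow hk.ne']
    norm_num

theorem breakpoint_pos {n : ℕ} (hn : n ≠ 0) : 0 < breakpoint n := by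
  rw [breakpoint_of_ne_zero hn]
  positivity

theorem breakpoint_lt_one (n : ℕ) : breakpoint n < 1 := by
  rcases eq_or_ne n 0 with rfl | hn
  · simp [breakpoint]
  · rw [breakpoint_of_ne_zero hn]
    exact Real.rpow_lt_one (by norm_num) (by norm_num) (by positivity)

theorem breakpoint_strictMono : StrictMono breakpoint := by
  refine strictMono_nat_of_lt_succ fun n => ?_
  rcases eq_or_ne n 0 with rfl | hn
  · simpa [breakpoint] using breakpoint_pos one_ne_zero
  · rw [breakpoint_of_ne_zero hn, breakpoint_of_ne_zero n.succ_ne_zero]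
    refine Real.rpow_lt_rpow_of_exponent_gt (by norm_num) (by norm_num) ?_
    exact inv_strictAnti₀ (by positivity)
      (by exact_mod_cast Nat.pow_lt_pow_right (by norm_num) n.lt_succ_self)

theorem tendsto_breakpoint : Tendsto breakpoint atTop (nhds 1) := by
  have hexp : Tendsto (fun n : ℕ => (((4 ^ n : ℕ) : ℝ))⁻¹) atTop (nhds 0) := by
    push_cast
    exact tendsto_inv_atTop_zero.comp (tendsto_pow_atTop_atTop_of_one_lt (by norm_num))
  have hlim := ((Real.continuousAt_const_rpow (a := (1 / 2 : ℝ)) (by norm_num)).tendsto.comp hexp)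
  rw [Real.rpow_zero] at hlim
  refine hlim.congr' ?_
  filter_upwards [eventually_ne_atTop 0] with n hn
  exact (breakpoint_of_ne_zero hn).symm

theorem blockExponent_add_two {n : ℕ} (hn : 1 ≤ n) : blockExponent n + 2 = 4 ^ n := by
  have : 4 ≤ 4 ^ n := Nat.le_self_pow (by omega) 4
  unfold blockExponent
  omega

theorem blockExponent_strictMono : StrictMono blockExponent := by
  refine strictMono_nat_of_lt_succ fun n => ?_
  have h1 : 1 ≤ 4 ^ n := Nat.one_le_pow _ _ (by norm_num)
  have h2 : 4 ^ n < 4 ^ (n + 1) := Nat.pow_lt_pow_right (by norm_num) n.lt_succ_self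
  unfold blockExponent
  omega

theorem stmt19 :
    ∃ (b : ℕ → ℝ) (m : ℕ → ℕ),
      b 0 = 0 ∧ StrictMono b ∧ (∀ n, b n < 1) ∧
      Tendsto b atTop (nhds 1) ∧
      (∀ n : ℕ, 1 ≤ n → m n < m (n + 1)) ∧
      ∀ n : ℕ, 1 ≤ n →
        (1 : ℝ) / 4 ≤ ∫ r in (b (n - 1))..(b n), ((m n : ℝ) + 1) * r ^ (m n + 1) := by
  refine ⟨breakpoint, blockExponent, if_pos rfl, breakpoint_strictMono, breakpoint_lt_one,
    tendsto_breakpoint, fun n _ => blockExponent_strictMono n.lt_succ_self, fun n hn => ?_⟩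
  have hm := blockExponent_add_two hn
  refine quarter_le_integral_natCast_add_one_mul_pow ?_ ?_ ?_
  · have : 4 ≤ 4 ^ n := Nat.le_self_pow (by omega) 4
    omega
  · rw [hm, breakpoint_pow_four_pow (by omega)]
  · rw [hm]
    exact breakpoint_pred_pow_four_pow_le hn
end
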